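/- arXiv:1411.6495 — 4 statements merged into one kernel-verified Lean document; each statement's English description precedes it below -/
import Mathlib

section
/- (Bass–Tate Lemma, explicit coboundary form.) Let a ∈ F with a ≠ 0 and a ≠ 1. Then the 2-cocycle (γ₁, γ₂) ↦ χ_{1−a}(γ₁)·χ_a(γ₂) on G_F with values in ℤ/pℤ is a coboundary: there exists a function h : G_F → ℤ/pℤ such that for all γ₁, γ₂ ∈ G_F one has χ_{1−a}(γ₁)·χ_a(γ₂) = h(γ₁) + h(γ₂) − h(γ₁γ₂). Equivalently, the cup product (1−a) ∪ (a) vanishes in H²(G_F, ℤ/pℤ). -/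
/-!
Write `ζ` for the image of `ξ` and `A i = 1 - ζ^i α`, so that `∏_{i<p} A i = 1 - α^p = β^p`.
An automorphism `γ` shifts the index of `A` by `k = χ_a(γ)`. Put `D n = ∏_{j<n} A j / β`,
which is `p`-periodic in `n`, and `w = ∏_{i<p} (A i)^i`; shifting the weights gives
`γ w = w · (D k)^p`. So for a `p`-th root `W` of `w`, `γ W = ζ^{h(γ)} · D k · W` for some
`h(γ) ∈ ℤ/p`. Comparing `(γ₁γ₂) W` with `γ₁ (γ₂ W)`, and using
`D k₁ · γ₁(D k₂) · ζ^{χ_{1-a}(γ₁) k₂} = D (k₁ + k₂)`, yields the coboundary relation.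
-/

open Finset Function

namespace IsPrimitiveRoot

theorem pow_eq_pow_iff_natCast_eq {M : Type*} [CommMonoid M] {ζ : M} {p : ℕ} [NeZero p]
    (hζ : IsPrimitiveRoot ζ p) {m n : ℕ} : ζ ^ m = ζ ^ n ↔ (m : ZMod p) = n := by
  rw [(hζ.isOfFinOrder (NeZero.ne p)).pow_eq_pow_iff_modEq, ← hζ.eq_orderOf,
    ZMod.natCast_eq_natCast_iff]

theorem prod_range_one_sub_pow_mul {R : Type*} [CommRing R] [IsDomain R] {ζ : R} {p : ℕ}
    (hζ : IsPrimitiveRoot ζ p) (hp : p ≠ 0) (α : R) :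
    ∏ i ∈ range p, (1 - ζ ^ i * α) = 1 - α ^ p := by
  simpa [Polynomial.eval_prod] using
    congrArg (Polynomial.eval 1) (X_pow_sub_C_eq_prod hζ (Nat.pos_of_ne_zero hp) rfl).symm

theorem exists_eq_pow_val {R : Type*} [CommRing R] [IsDomain R] {ζ x : R} {p : ℕ} [NeZero p]
    (hζ : IsPrimitiveRoot ζ p) (hx : x ^ p = 1) : ∃ m : ZMod p, x = ζ ^ m.val := by
  obtain ⟨i, hip, rfl⟩ := hζ.eq_pow_of_pow_eq_one hx
  exact ⟨i, by rw [ZMod.val_cast_of_lt hip]⟩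

end IsPrimitiveRoot

theorem Finset.prod_range_succ_pow_mul_prod_range_succ {M : Type*} [CommMonoid M] (g : ℕ → M)
    (m : ℕ) : (∏ i ∈ range m, g (i + 1) ^ i) * ∏ i ∈ range m, g (i + 1)
      = (∏ i ∈ range m, g i ^ i) * g m ^ m := by
  rw [← prod_mul_distrib, ← prod_range_succ]
  simp_rw [← pow_succ]
  rw [prod_range_succ' (fun i => g i ^ i), pow_zero, mul_one]

namespace Function.Periodic

variable {M : Type*} [CommMonoid M] {A : ℕ → M} {p : ℕ}

theorem prod_range_add_eq (hA : Periodic A p) (k : ℕ) :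
    ∏ i ∈ range p, A (i + k) = ∏ i ∈ range p, A i := by
  induction k with
  | zero => rfl
  | succ k ih =>
    rw [← ih]
    rcases p with _ | p
    · simp
    · rw [prod_range_succ, prod_range_succ' (fun i => A (i + k)), zero_add,
        show p + (k + 1) = k + (p + 1) by omega, hA k]
      exact congrArg (· * A k) (prod_congr rfl fun i _ => congrArg A (by omega))

theorem prod_range_add_period (hA : Periodic A p) (n : ℕ) :
    ∏ i ∈ range (n + p), A i = (∏ i ∈ range n, A i) * ∏ i ∈ range p, A i := by
  rw [prod_range_add, ← hA.prod_range_add_eq n]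
  simp_rw [add_comm]

theorem periodic_prod_range (hA : Periodic A p) (h1 : ∏ i ∈ range p, A i = 1) :
    Periodic (fun n => ∏ i ∈ range n, A i) p := fun n => by
  dsimp only
  rw [hA.prod_range_add_period, h1, mul_one]

theorem prod_range_pow_add_mul (hA : Periodic A p) (k : ℕ) :
    (∏ i ∈ range p, A (i + k) ^ i) * (∏ i ∈ range p, A i) ^ k
      = (∏ i ∈ range p, A i ^ i) * (∏ i ∈ range k, A i) ^ p := by
  induction k with
  | zero => simp
  | succ k ih =>
    have shift : (∏ i ∈ range p, A (i + (k + 1)) ^ i) * ∏ i ∈ range p, A i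
        = (∏ i ∈ range p, A (i + k) ^ i) * A k ^ p := by
      have e : ∀ i, i + (k + 1) = i + 1 + k := fun i => by omega
      rw [← hA.prod_range_add_eq (k + 1)]
      simp only [e]
      rw [prod_range_succ_pow_mul_prod_range_succ (fun i => A (i + k)), add_comm p k, hA k]
    calc (∏ i ∈ range p, A (i + (k + 1)) ^ i) * (∏ i ∈ range p, A i) ^ (k + 1)
        = ((∏ i ∈ range p, A (i + (k + 1)) ^ i) * ∏ i ∈ range p, A i)
            * (∏ i ∈ range p, A i) ^ k := by rw [pow_succ', mul_assoc]
      _ = ((∏ i ∈ range p, A (i + k) ^ i) * (∏ i ∈ range p, A i) ^ k) * A k ^ p := by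
        rw [shift, mul_right_comm]
      _ = (∏ i ∈ range p, A i ^ i) * (∏ i ∈ range (k + 1), A i) ^ p := by
        rw [ih, prod_range_succ, mul_pow, mul_assoc]

end Function.Periodic

def IsKummerCharacter {G K : Type*} [SMul G K] [Monoid K] {p : ℕ} (ζ α : K) (χ : G → ZMod p) :
    Prop :=
  ∀ γ : G, γ • α = ζ ^ (χ γ).val * α

section KummerCharacter

variable {G K : Type*} [Monoid G] [Field K] [MulSemiringAction G K] {p : ℕ} [NeZero p] {ζ : K}

theorem IsKummerCharacter.map_mul {α : K} {χ : G → ZMod p} (hχ : IsKummerCharacter ζ α χ)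
    (hζ : IsPrimitiveRoot ζ p) (hζG : ∀ γ : G, γ • ζ = ζ) (hα : α ≠ 0) (γ₁ γ₂ : G) :
    χ (γ₁ * γ₂) = χ γ₁ + χ γ₂ := by
  have e : ζ ^ (χ (γ₁ * γ₂)).val = ζ ^ ((χ γ₁).val + (χ γ₂).val) := by
    refine mul_right_cancel₀ hα ?_
    rw [← hχ, mul_smul, hχ γ₂, smul_mul', smul_pow', hζG, hχ γ₁, pow_add]
    ring
  simpa using hζ.pow_eq_pow_iff_natCast_eq.mp e

theorem coboundary_eq_of_smul_eq_pow_mul (hζ : IsPrimitiveRoot ζ p) (hζG : ∀ γ : G, γ • ζ = ζ)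
    {W : K} (hW : W ≠ 0) {d : G → K} {h : G → ZMod p}
    (hWd : ∀ γ : G, γ • W = ζ ^ (h γ).val * (d γ * W)) {γ₁ γ₂ : G} {c : ZMod p}
    (hd : d γ₁ * γ₁ • d γ₂ * ζ ^ c.val = d (γ₁ * γ₂)) (hd0 : d (γ₁ * γ₂) ≠ 0) :
    c = h γ₁ + h γ₂ - h (γ₁ * γ₂) := by
  have e := hWd (γ₁ * γ₂)
  rw [mul_smul, hWd γ₂, smul_mul', smul_mul', smul_pow', hζG, hWd γ₁, ← hd] at e
  have hdW : d γ₁ * γ₁ • d γ₂ * W ≠ 0 :=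
    mul_ne_zero (left_ne_zero_of_mul (hd ▸ hd0)) hW
  have e' : ζ ^ ((h (γ₁ * γ₂)).val + c.val) = ζ ^ ((h γ₁).val + (h γ₂).val) := by
    refine mul_right_cancel₀ hdW ?_
    rw [pow_add, pow_add]
    linear_combination -e
  have := hζ.pow_eq_pow_iff_natCast_eq.mp e'
  push_cast [ZMod.natCast_zmod_val] at this
  linear_combination this

end KummerCharacter

namespace BassTate

variable {K : Type*} [Field K] {p : ℕ} {ζ α β : K}

def factor (ζ α : K) (n : ℕ) : K := 1 - ζ ^ n * α

def partialProd (ζ α β : K) (n : ℕ) : K := ∏ j ∈ range n, factor ζ α j / β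

def weightedProd (p : ℕ) (ζ α : K) : K := ∏ i ∈ range p, factor ζ α i ^ i

theorem factor_periodic (hζ : IsPrimitiveRoot ζ p) : Periodic (factor ζ α) p := fun n => by
  rw [factor, factor, pow_add, hζ.pow_eq_one, mul_one]

theorem factor_ne_zero (hζ : IsPrimitiveRoot ζ p) (hα : α ^ p ≠ 1) (n : ℕ) :
    factor ζ α n ≠ 0 := by
  intro h
  apply hα
  rw [← one_pow p, eq_of_sub_eq_zero h, mul_pow, ← pow_mul, mul_comm n, pow_mul,
    hζ.pow_eq_one, one_pow, one_mul]

theorem prod_range_factor [NeZero p] (hζ : IsPrimitiveRoot ζ p) :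
    ∏ i ∈ range p, factor ζ α i = 1 - α ^ p :=
  hζ.prod_range_one_sub_pow_mul (NeZero.ne p) α

theorem partialProd_ne_zero (hζ : IsPrimitiveRoot ζ p) (hα : α ^ p ≠ 1) (hβ : β ≠ 0) (n : ℕ) :
    partialProd ζ α β n ≠ 0 :=
  prod_ne_zero_iff.mpr fun j _ => div_ne_zero (factor_ne_zero hζ hα j) hβ

theorem weightedProd_ne_zero (hζ : IsPrimitiveRoot ζ p) (hα : α ^ p ≠ 1) :
    weightedProd p ζ α ≠ 0 :=
  prod_ne_zero_iff.mpr fun i _ => pow_ne_zero i (factor_ne_zero hζ hα i)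

theorem partialProd_periodic [NeZero p] (hζ : IsPrimitiveRoot ζ p) (hβ : β ^ p = 1 - α ^ p)
    (hβ0 : β ≠ 0) : Periodic (partialProd ζ α β) p := by
  refine Periodic.periodic_prod_range (fun n => ?_) ?_
  · rw [factor_periodic hζ n]
  · rw [prod_div_distrib, prod_const, card_range, prod_range_factor hζ, ← hβ,
      div_self (pow_ne_zero p hβ0)]

section Action

variable {G : Type*} [Monoid G] [MulSemiringAction G K] {χa χb : G → ZMod p}

theorem smul_factor (hζG : ∀ γ : G, γ • ζ = ζ) (hχa : IsKummerCharacter ζ α χa) (γ : G)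
    (n : ℕ) : γ • factor ζ α n = factor ζ α (n + (χa γ).val) := by
  rw [factor, factor, smul_sub, smul_one, smul_mul', smul_pow', hζG, hχa, pow_add, mul_assoc]

theorem partialProd_mul_smul_partialProd [NeZero p] (hζ : IsPrimitiveRoot ζ p)
    (hζG : ∀ γ : G, γ • ζ = ζ) (hχa : IsKummerCharacter ζ α χa)
    (hχb : IsKummerCharacter ζ β χb) (γ : G) (n : ℕ) :
    partialProd ζ α β (χa γ).val * γ • partialProd ζ α β n * ζ ^ ((χb γ).val * n)
      = partialProd ζ α β ((χa γ).val + n) := by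
  have hζ0 : ζ ^ (χb γ).val ≠ 0 := pow_ne_zero _ (hζ.ne_zero (NeZero.ne p))
  have hconst : (ζ ^ (χb γ).val) ^ n = ∏ _j ∈ range n, ζ ^ (χb γ).val := by
    rw [prod_const, card_range]
  rw [partialProd, partialProd, partialProd, prod_range_add, smul_prod', mul_assoc, pow_mul,
    hconst, ← prod_mul_distrib]
  congr 1
  refine prod_congr rfl fun j _ => ?_
  rw [div_eq_mul_inv, smul_mul', smul_inv'', smul_factor hζG hχa, hχb, add_comm, mul_inv,
    mul_assoc, mul_assoc, mul_comm β⁻¹, inv_mul_cancel_left₀ hζ0, div_eq_mul_inv]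

theorem smul_weightedProd [NeZero p] (hζ : IsPrimitiveRoot ζ p) (hζG : ∀ γ : G, γ • ζ = ζ)
    (hχa : IsKummerCharacter ζ α χa) (hβ : β ^ p = 1 - α ^ p) (hβ0 : β ≠ 0) (γ : G) :
    γ • weightedProd p ζ α = weightedProd p ζ α * partialProd ζ α β (χa γ).val ^ p := by
  have key := (factor_periodic (α := α) hζ).prod_range_pow_add_mul (χa γ).val
  rw [prod_range_factor hζ, ← hβ, ← pow_mul, mul_comm p, pow_mul] at key
  rw [weightedProd, smul_prod', partialProd, prod_div_distrib, prod_const, card_range, div_pow,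
    ← mul_div_assoc, ← key, mul_div_cancel_right₀ _ (pow_ne_zero _ (pow_ne_zero _ hβ0))]
  exact prod_congr rfl fun i _ => by rw [smul_pow', smul_factor hζG hχa]

theorem exists_smul_eq_pow_mul [NeZero p] (hζ : IsPrimitiveRoot ζ p) (hζG : ∀ γ : G, γ • ζ = ζ)
    (hχa : IsKummerCharacter ζ α χa) (hα : α ^ p ≠ 1) (hβ : β ^ p = 1 - α ^ p) (hβ0 : β ≠ 0)
    {W : K} (hW : W ^ p = weightedProd p ζ α) (γ : G) :
    ∃ m : ZMod p, γ • W = ζ ^ m.val * (partialProd ζ α β (χa γ).val * W) := by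
  have hW0 : W ≠ 0 := ne_zero_pow (NeZero.ne p) (hW ▸ weightedProd_ne_zero hζ hα)
  have hDW : partialProd ζ α β (χa γ).val * W ≠ 0 :=
    mul_ne_zero (partialProd_ne_zero hζ hα hβ0 _) hW0
  obtain ⟨m, hm⟩ := hζ.exists_eq_pow_val (x := γ • W / (partialProd ζ α β (χa γ).val * W)) (by
    rw [div_pow, ← smul_pow', hW, smul_weightedProd hζ hζG hχa hβ hβ0, ← hW, ← mul_pow,
      mul_comm W]
    exact div_self (pow_ne_zero _ hDW))
  exact ⟨m, by rw [← hm, div_mul_cancel₀ _ hDW]⟩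

theorem partialProd_mul_smul_partialProd_mul_pow [NeZero p] (hζ : IsPrimitiveRoot ζ p)
    (hζG : ∀ γ : G, γ • ζ = ζ) (hα0 : α ≠ 0) (hχa : IsKummerCharacter ζ α χa)
    (hχb : IsKummerCharacter ζ β χb) (hβ : β ^ p = 1 - α ^ p) (hβ0 : β ≠ 0) (γ₁ γ₂ : G) :
    partialProd ζ α β (χa γ₁).val * γ₁ • partialProd ζ α β (χa γ₂).val
        * ζ ^ (χb γ₁ * χa γ₂).val = partialProd ζ α β (χa (γ₁ * γ₂)).val := by
  have hpow : ζ ^ (χb γ₁ * χa γ₂).val = ζ ^ ((χb γ₁).val * (χa γ₂).val) :=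
    hζ.pow_eq_pow_iff_natCast_eq.mpr (by simp)
  rw [hpow, partialProd_mul_smul_partialProd hζ hζG hχa hχb,
    hχa.map_mul hζ hζG hα0, ZMod.val_add, (partialProd_periodic hζ hβ hβ0).map_mod_nat]

end Action

end BassTate

theorem bass_tate_explicit_coboundary_general
    (p : ℕ)
    (F : Type*) [Field F] (ξ : F) (hξ : IsPrimitiveRoot ξ p)
    (a : F) (ha0 : a ≠ 0) (ha1 : a ≠ 1)
    (α β : AlgebraicClosure F)
    (hα : α ^ p = algebraMap F (AlgebraicClosure F) a)
    (hβ : β ^ p = algebraMap F (AlgebraicClosure F) (1 - a))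
    (χa χb : (AlgebraicClosure F ≃ₐ[F] AlgebraicClosure F) → ZMod p)
    (hχa : ∀ γ : AlgebraicClosure F ≃ₐ[F] AlgebraicClosure F,
      γ α = algebraMap F (AlgebraicClosure F) ξ ^ (χa γ).val * α)
    (hχb : ∀ γ : AlgebraicClosure F ≃ₐ[F] AlgebraicClosure F,
      γ β = algebraMap F (AlgebraicClosure F) ξ ^ (χb γ).val * β) :
    ∃ h : (AlgebraicClosure F ≃ₐ[F] AlgebraicClosure F) → ZMod p,
      ∀ γ₁ γ₂ : AlgebraicClosure F ≃ₐ[F] AlgebraicClosure F,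
        χb γ₁ * χa γ₂ = h γ₁ + h γ₂ - h (γ₁ * γ₂) := by
  have hα1 : α ^ p ≠ 1 := by
    rw [hα, ← map_one (algebraMap F _)]
    exact (algebraMap F _).injective.ne ha1
  have : NeZero p := ⟨by rintro rfl; exact hα1 (pow_zero α)⟩
  have hα0 : α ≠ 0 :=
    ne_zero_pow (NeZero.ne p) (by rw [hα]; exact (map_ne_zero _).mpr ha0)
  have hβ' : β ^ p = 1 - α ^ p := by rw [hβ, hα, map_sub, map_one]
  have hβ0 : β ≠ 0 := ne_zero_pow (NeZero.ne p) (by rw [hβ']; exact sub_ne_zero.mpr hα1.symm)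
  have hζ := hξ.map_of_injective (algebraMap F (AlgebraicClosure F)).injective
  have hζG (γ : AlgebraicClosure F ≃ₐ[F] AlgebraicClosure F) :
      γ • algebraMap F (AlgebraicClosure F) ξ = algebraMap F (AlgebraicClosure F) ξ :=
    γ.commutes ξ
  obtain ⟨W, hW⟩ := IsAlgClosed.exists_pow_nat_eq
    (BassTate.weightedProd p (algebraMap F _ ξ) α) (NeZero.pos p)
  have hW0 : W ≠ 0 := ne_zero_pow (NeZero.ne p) (hW ▸ BassTate.weightedProd_ne_zero hζ hα1)
  choose h hh using BassTate.exists_smul_eq_pow_mul hζ hζG hχa hα1 hβ' hβ0 hW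
  exact ⟨h, fun γ₁ γ₂ => coboundary_eq_of_smul_eq_pow_mul hζ hζG hW0 hh
    (BassTate.partialProd_mul_smul_partialProd_mul_pow hζ hζG hα0 hχa hχb hβ' hβ0 γ₁ γ₂)
    (BassTate.partialProd_ne_zero hζ hα1 hβ0 _)⟩

/-- **Bass–Tate Lemma, explicit coboundary form.**
Let `F` be a field containing a primitive `p`-th root of unity `ξ`, with absolute Galois
group `G_F = Gal(F̄/F)`.  For `a ∈ F^×`, fixing `α` with `α^p = a`, the Kummer character
`χ_a : G_F → ℤ/pℤ` is determined by `γ(α) = ξ^{χ_a(γ)}·α`.  If `a ≠ 0, 1` then the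
2-cocycle `(γ₁, γ₂) ↦ χ_{1−a}(γ₁)·χ_a(γ₂)` is a coboundary: there is `h : G_F → ℤ/pℤ`
with `χ_{1−a}(γ₁)·χ_a(γ₂) = h(γ₁) + h(γ₂) − h(γ₁γ₂)` for all `γ₁, γ₂`; equivalently,
`(1−a) ∪ (a) = 0` in `H²(G_F, ℤ/pℤ)`. -/
theorem bass_tate_explicit_coboundary
    (p : ℕ) [Fact p.Prime]
    (F : Type*) [Field F] (ξ : F) (hξ : IsPrimitiveRoot ξ p)
    (a : F) (ha0 : a ≠ 0) (ha1 : a ≠ 1)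
    (α β : AlgebraicClosure F)
    (hα : α ^ p = algebraMap F (AlgebraicClosure F) a)
    (hβ : β ^ p = algebraMap F (AlgebraicClosure F) (1 - a))
    (χa χb : (AlgebraicClosure F ≃ₐ[F] AlgebraicClosure F) → ZMod p)
    (hχa : ∀ γ : AlgebraicClosure F ≃ₐ[F] AlgebraicClosure F,
      γ α = algebraMap F (AlgebraicClosure F) ξ ^ (χa γ).val * α)
    (hχb : ∀ γ : AlgebraicClosure F ≃ₐ[F] AlgebraicClosure F,
      γ β = algebraMap F (AlgebraicClosure F) ξ ^ (χb γ).val * β) :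
    ∃ h : (AlgebraicClosure F ≃ₐ[F] AlgebraicClosure F) → ZMod p,
      ∀ γ₁ γ₂ : AlgebraicClosure F ≃ₐ[F] AlgebraicClosure F,
        χb γ₁ * χa γ₂ = h γ₁ + h γ₂ - h (γ₁ * γ₂) :=
  bass_tate_explicit_coboundary_general p F ξ hξ a ha0 ha1 α β hα hβ χa χb hχa hχb
end

section
/- (Classification of extensions of ℤ/pⁿℤ by a cyclic 𝔽_p[ℤ/pⁿℤ]-module.) Let E be a finite group with a normal subgroup N such that N is an elementary abelian p-group, E/N is cyclic of order pⁿ, and, after fixing an isomorphism θ : E/N ≅ G_n, the conjugation action of E/N on N makes N isomorphic to A_i as an 𝔽_p[G_n]-module for some 1 ≤ i ≤ pⁿ. If i = pⁿ, then E ≅ A_{pⁿ} ⋊ G_n. If 1 ≤ i < pⁿ, then E is isomorphic to A_i ⋊ G_n or to A_i • G_n. -/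
open Polynomial

/-! ### The groups `A_ℓ ⋊ G_n` and `A_ℓ • G_n`, and embedding problems

`G_n` denotes the cyclic group `ℤ/pⁿℤ` with fixed generator `σ`, and
`A_ℓ = 𝔽_p[G_n]/⟨(σ−1)^ℓ⟩`. -/

/-- The group algebra `𝔽_p[ℤ/pⁿℤ]` of the cyclic group `G_n = ℤ/pⁿℤ`. -/
abbrev GrpAlg (p n : ℕ) : Type :=
  MonoidAlgebra (ZMod p) (Multiplicative (ZMod (p ^ n)))

/-- The image in the group algebra of the fixed generator `σ` of `ℤ/pⁿℤ`. -/
noncomputable def sigGen (p n : ℕ) : GrpAlg p n :=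
  MonoidAlgebra.of (ZMod p) (Multiplicative (ZMod (p ^ n)))
    (Multiplicative.ofAdd (1 : ZMod (p ^ n)))

/-- The cyclic `𝔽_p[G_n]`-module `A_ℓ = 𝔽_p[G_n]/⟨(σ−1)^ℓ⟩` (as a quotient ring; its
underlying additive group is the module, and `σ` acts by multiplication by `σ`). -/
abbrev Amod (p n ℓ : ℕ) : Type :=
  GrpAlg p n ⧸ Ideal.span {(sigGen p n - 1) ^ ℓ}

/-- The image of `σ` in `A_ℓ`. -/
noncomputable def sigA (p n ℓ : ℕ) : Amod p n ℓ :=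
  Ideal.Quotient.mk (Ideal.span {(sigGen p n - 1) ^ ℓ}) (sigGen p n)

lemma sigGen_pow_order (p n : ℕ) : sigGen p n ^ p ^ n = 1 := by
  rw [sigGen, ← map_pow]
  have h : (Multiplicative.ofAdd (1 : ZMod (p ^ n))) ^ p ^ n = 1 := by
    rw [← ofAdd_nsmul, nsmul_eq_mul, mul_one, ZMod.natCast_self, ofAdd_zero]
  rw [h, map_one]

lemma sigA_pow_order (p n ℓ : ℕ) : sigA p n ℓ ^ p ^ n = 1 := by
  rw [sigA, ← map_pow, sigGen_pow_order, map_one]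

lemma sigA_pow_val_add (p n ℓ : ℕ) [NeZero (p ^ n)] (a b : ZMod (p ^ n)) :
    sigA p n ℓ ^ (a + b).val = sigA p n ℓ ^ a.val * sigA p n ℓ ^ b.val := by
  rw [ZMod.val_add, ← pow_add]
  exact (pow_eq_pow_mod (a.val + b.val) (sigA_pow_order p n ℓ)).symm

set_option maxHeartbeats 1000000 in
set_option synthInstance.maxHeartbeats 200000 in
lemma sigA_sub_one_pow_self (p n ℓ : ℕ) : (sigA p n ℓ - 1) ^ ℓ = 0 := by
  have h : sigA p n ℓ - 1
      = Ideal.Quotient.mk (Ideal.span {(sigGen p n - 1) ^ ℓ}) (sigGen p n - 1) := by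
    rw [map_sub, map_one, sigA]
  rw [h, ← map_pow, Ideal.Quotient.eq_zero_iff_mem]
  exact Ideal.subset_span rfl

lemma sigA_mul_eps (p n ℓ : ℕ) :
    sigA p n ℓ * (sigA p n ℓ - 1) ^ (ℓ - 1) = (sigA p n ℓ - 1) ^ (ℓ - 1) := by
  rcases Nat.eq_zero_or_pos ℓ with h | h
  · subst h
    have h0 : (0 : Amod p n 0) = 1 := by
      have := sigA_sub_one_pow_self p n 0
      rw [pow_zero] at this
      exact this.symm
    haveI : Subsingleton (Amod p n 0) := subsingleton_of_zero_eq_one h0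
    exact Subsingleton.elim _ _
  · have h2 : (sigA p n ℓ - 1) * (sigA p n ℓ - 1) ^ (ℓ - 1) = 0 := by
      have h3 : (sigA p n ℓ - 1) * (sigA p n ℓ - 1) ^ (ℓ - 1)
          = (sigA p n ℓ - 1) ^ (ℓ - 1 + 1) := by
        rw [pow_succ]; ring
      rw [h3, Nat.sub_add_cancel h]
      exact sigA_sub_one_pow_self p n ℓ
    linear_combination h2

lemma sigA_pow_mul_eps (p n ℓ : ℕ) (k : ℕ) :
    sigA p n ℓ ^ k * (sigA p n ℓ - 1) ^ (ℓ - 1) = (sigA p n ℓ - 1) ^ (ℓ - 1) := by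
  induction k with
  | zero => rw [pow_zero, one_mul]
  | succ m ih =>
    rw [pow_succ, mul_assoc, sigA_mul_eps, ih]

lemma carry_cocycle (p n ℓ : ℕ) [NeZero (p ^ n)] (x y z : ZMod (p ^ n)) :
    ((if x.val + y.val < p ^ n then (0 : Amod p n ℓ) else (sigA p n ℓ - 1) ^ (ℓ - 1)) +
      (if (x + y).val + z.val < p ^ n then (0 : Amod p n ℓ) else (sigA p n ℓ - 1) ^ (ℓ - 1)))
    = ((if y.val + z.val < p ^ n then (0 : Amod p n ℓ) else (sigA p n ℓ - 1) ^ (ℓ - 1)) +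
      (if x.val + (y + z).val < p ^ n then (0 : Amod p n ℓ) else (sigA p n ℓ - 1) ^ (ℓ - 1))) := by
  have hx := ZMod.val_lt x
  have hy := ZMod.val_lt y
  have hz := ZMod.val_lt z
  rw [ZMod.val_add x y, ZMod.val_add y z]
  rcases Nat.lt_or_ge (x.val + y.val) (p ^ n) with h1 | h1 <;>
    rcases Nat.lt_or_ge (y.val + z.val) (p ^ n) with h2 | h2
  · rw [Nat.mod_eq_of_lt h1, Nat.mod_eq_of_lt h2]
    split_ifs <;> first | ring1 | (exfalso; omega)
  · have e2 : (y.val + z.val) % p ^ n = y.val + z.val - p ^ n := by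
      rw [Nat.mod_eq_sub_mod h2, Nat.mod_eq_of_lt (by omega)]
    rw [Nat.mod_eq_of_lt h1, e2]
    split_ifs <;> first | ring1 | (exfalso; omega)
  · have e1 : (x.val + y.val) % p ^ n = x.val + y.val - p ^ n := by
      rw [Nat.mod_eq_sub_mod h1, Nat.mod_eq_of_lt (by omega)]
    rw [e1, Nat.mod_eq_of_lt h2]
    split_ifs <;> first | ring1 | (exfalso; omega)
  · have e1 : (x.val + y.val) % p ^ n = x.val + y.val - p ^ n := by
      rw [Nat.mod_eq_sub_mod h1, Nat.mod_eq_of_lt (by omega)]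
    have e2 : (y.val + z.val) % p ^ n = y.val + z.val - p ^ n := by
      rw [Nat.mod_eq_sub_mod h2, Nat.mod_eq_of_lt (by omega)]
    rw [e1, e2]
    split_ifs <;> first | ring1 | (exfalso; omega)

/-- The semidirect product `A_ℓ ⋊ G_n`, with multiplication
`(f₁, σ^{j₁})(f₂, σ^{j₂}) = (f₁ + σ^{j₁}·f₂, σ^{j₁+j₂})`. -/
@[ext] structure ASemi (p n ℓ : ℕ) where
  f : Amod p n ℓ
  j : ZMod (p ^ n)

namespace ASemi

variable {p n ℓ : ℕ}

noncomputable instance : Mul (ASemi p n ℓ) :=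
  ⟨fun a b => ⟨a.f + sigA p n ℓ ^ a.j.val * b.f, a.j + b.j⟩⟩
noncomputable instance : One (ASemi p n ℓ) := ⟨⟨0, 0⟩⟩
noncomputable instance : Inv (ASemi p n ℓ) :=
  ⟨fun a => ⟨-(sigA p n ℓ ^ (-a.j).val * a.f), -a.j⟩⟩

lemma mul_def (a b : ASemi p n ℓ) :
    a * b = ⟨a.f + sigA p n ℓ ^ a.j.val * b.f, a.j + b.j⟩ := rfl
lemma one_def : (1 : ASemi p n ℓ) = ⟨0, 0⟩ := rfl
lemma inv_def (a : ASemi p n ℓ) :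
    a⁻¹ = ⟨-(sigA p n ℓ ^ (-a.j).val * a.f), -a.j⟩ := rfl

noncomputable instance [NeZero (p ^ n)] : Group (ASemi p n ℓ) where
  mul_assoc a b c := by
    ext
    · show a.f + sigA p n ℓ ^ a.j.val * b.f + sigA p n ℓ ^ (a.j + b.j).val * c.f
        = a.f + sigA p n ℓ ^ a.j.val * (b.f + sigA p n ℓ ^ b.j.val * c.f)
      rw [sigA_pow_val_add]; ring
    · show a.j + b.j + c.j = a.j + (b.j + c.j)
      exact add_assoc _ _ _
  one_mul a := by
    ext
    · show (0 : Amod p n ℓ) + sigA p n ℓ ^ (0 : ZMod (p ^ n)).val * a.f = a.f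
      simp [ZMod.val_zero]
    · show (0 : ZMod (p ^ n)) + a.j = a.j
      exact zero_add _
  mul_one a := by
    ext
    · show a.f + sigA p n ℓ ^ a.j.val * 0 = a.f
      simp
    · show a.j + 0 = a.j
      exact add_zero _
  inv_mul_cancel a := by
    ext
    · show -(sigA p n ℓ ^ (-a.j).val * a.f) + sigA p n ℓ ^ (-a.j).val * a.f = 0
      exact neg_add_cancel _
    · show -a.j + a.j = 0
      exact neg_add_cancel _

end ASemi

/-- The non-split extension `A_ℓ • G_n` (for `1 ≤ ℓ < pⁿ`), with multiplication
`(f₁, σ^{j₁})(f₂, σ^{j₂}) = (f₁ + σ^{j₁}·f₂ [+ (σ−1)^{ℓ−1} if j₁+j₂ ≥ pⁿ], σ^{j₁+j₂})`,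
where `j₁, j₂` are the representatives in `{0, …, pⁿ−1}`. -/
@[ext] structure ABull (p n ℓ : ℕ) where
  f : Amod p n ℓ
  j : ZMod (p ^ n)

namespace ABull

variable {p n ℓ : ℕ}

noncomputable instance : Mul (ABull p n ℓ) :=
  ⟨fun a b => ⟨a.f + sigA p n ℓ ^ a.j.val * b.f +
      (if a.j.val + b.j.val < p ^ n then 0 else (sigA p n ℓ - 1) ^ (ℓ - 1)),
    a.j + b.j⟩⟩
noncomputable instance : One (ABull p n ℓ) := ⟨⟨0, 0⟩⟩
noncomputable instance : Inv (ABull p n ℓ) :=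
  ⟨fun a => ⟨-(sigA p n ℓ ^ (-a.j).val *
      (a.f + if a.j = 0 then 0 else (sigA p n ℓ - 1) ^ (ℓ - 1))), -a.j⟩⟩

lemma mul_def (a b : ABull p n ℓ) :
    a * b = ⟨a.f + sigA p n ℓ ^ a.j.val * b.f +
      (if a.j.val + b.j.val < p ^ n then 0 else (sigA p n ℓ - 1) ^ (ℓ - 1)),
    a.j + b.j⟩ := rfl
lemma one_def : (1 : ABull p n ℓ) = ⟨0, 0⟩ := rfl
lemma inv_def (a : ABull p n ℓ) :
    a⁻¹ = ⟨-(sigA p n ℓ ^ (-a.j).val *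
      (a.f + if a.j = 0 then 0 else (sigA p n ℓ - 1) ^ (ℓ - 1))), -a.j⟩ := rfl

noncomputable instance [NeZero (p ^ n)] : Group (ABull p n ℓ) where
  mul_assoc a b c := by
    ext
    · show a.f + sigA p n ℓ ^ a.j.val * b.f +
          (if a.j.val + b.j.val < p ^ n then 0 else (sigA p n ℓ - 1) ^ (ℓ - 1)) +
          sigA p n ℓ ^ (a.j + b.j).val * c.f +
          (if (a.j + b.j).val + c.j.val < p ^ n then 0 else (sigA p n ℓ - 1) ^ (ℓ - 1))
        = a.f + sigA p n ℓ ^ a.j.val *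
            (b.f + sigA p n ℓ ^ b.j.val * c.f +
              (if b.j.val + c.j.val < p ^ n then 0 else (sigA p n ℓ - 1) ^ (ℓ - 1))) +
          (if a.j.val + (b.j + c.j).val < p ^ n then 0 else (sigA p n ℓ - 1) ^ (ℓ - 1))
      have hmul : sigA p n ℓ ^ a.j.val *
          (if b.j.val + c.j.val < p ^ n then (0 : Amod p n ℓ)
            else (sigA p n ℓ - 1) ^ (ℓ - 1))
          = (if b.j.val + c.j.val < p ^ n then (0 : Amod p n ℓ)
            else (sigA p n ℓ - 1) ^ (ℓ - 1)) := by
        split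
        · rw [mul_zero]
        · exact sigA_pow_mul_eps p n ℓ _
      rw [sigA_pow_val_add, mul_add, mul_add, hmul]
      linear_combination carry_cocycle p n ℓ a.j b.j c.j
    · show a.j + b.j + c.j = a.j + (b.j + c.j)
      exact add_assoc _ _ _
  one_mul a := by
    ext
    · show (0 : Amod p n ℓ) + sigA p n ℓ ^ (0 : ZMod (p ^ n)).val * a.f +
          (if (0 : ZMod (p ^ n)).val + a.j.val < p ^ n then 0
            else (sigA p n ℓ - 1) ^ (ℓ - 1))
        = a.f
      rw [ZMod.val_zero, if_pos (by simpa using ZMod.val_lt a.j)]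
      simp
    · show (0 : ZMod (p ^ n)) + a.j = a.j
      exact zero_add _
  mul_one a := by
    ext
    · show a.f + sigA p n ℓ ^ a.j.val * 0 +
          (if a.j.val + (0 : ZMod (p ^ n)).val < p ^ n then 0
            else (sigA p n ℓ - 1) ^ (ℓ - 1))
        = a.f
      rw [ZMod.val_zero, if_pos (by simpa using ZMod.val_lt a.j)]
      simp
    · show a.j + 0 = a.j
      exact add_zero _
  inv_mul_cancel a := by
    ext
    · show -(sigA p n ℓ ^ (-a.j).val *
          (a.f + if a.j = 0 then 0 else (sigA p n ℓ - 1) ^ (ℓ - 1))) +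
          sigA p n ℓ ^ (-a.j).val * a.f +
          (if (-a.j).val + a.j.val < p ^ n then 0 else (sigA p n ℓ - 1) ^ (ℓ - 1))
        = 0
      rcases eq_or_ne a.j 0 with h | h
      · rw [if_pos h, h]
        rw [if_pos (by simpa using NeZero.pos (p ^ n))]
        ring
      · rw [if_neg h]
        have hval : (-a.j).val + a.j.val = p ^ n := by
          rw [ZMod.neg_val, if_neg h]
          have hlt := ZMod.val_lt a.j
          have hpos : a.j.val ≠ 0 := fun h0 => h ((ZMod.val_eq_zero a.j).mp h0)
          omega
        rw [if_neg (by omega)]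
        rw [mul_add, sigA_pow_mul_eps]
        ring
    · show -a.j + a.j = 0
      exact neg_add_cancel _

end ABull

/-- The natural projection `A_ℓ ⋊ G_n ↠ G_n`, `(f, σ^j) ↦ σ^j`. -/
noncomputable def piSemi (p n ℓ : ℕ) [NeZero (p ^ n)] :
    ASemi p n ℓ →* Multiplicative (ZMod (p ^ n)) where
  toFun a := Multiplicative.ofAdd a.j
  map_one' := rfl
  map_mul' _ _ := rfl

/-- The natural projection `A_ℓ • G_n ↠ G_n`, `(f, σ^j) ↦ σ^j`. -/
noncomputable def piBull (p n ℓ : ℕ) [NeZero (p ^ n)] :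
    ABull p n ℓ →* Multiplicative (ZMod (p ^ n)) where
  toFun a := Multiplicative.ofAdd a.j
  map_one' := rfl
  map_mul' _ _ := rfl

/-- `L` is a solution of the embedding problem `π : G ↠ Q` over `K/F`, with respect to
the fixed identification `φ : Gal(K/F) ≅ Q`: it asks that `K ⊆ L`, that `L/F` be finite
Galois, and that there be an isomorphism `ψ : Gal(L/F) ≅ G` with `π ∘ ψ = φ ∘ res`,
where `res : Gal(L/F) → Gal(K/F)` is the restriction map. -/
def IsEPSolution {F Ω : Type*} [Field F] [Field Ω] [Algebra F Ω]
    {G Q : Type*} [Group G] [Group Q] (π : G →* Q)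
    (K : IntermediateField F Ω) (φ : (↥K ≃ₐ[F] ↥K) ≃* Q)
    (L : IntermediateField F Ω) : Prop :=
  ∃ hKL : K ≤ L, FiniteDimensional F ↥L ∧ IsGalois F ↥L ∧
    ∃ ψ : (↥L ≃ₐ[F] ↥L) ≃* G,
      ∀ (g : ↥L ≃ₐ[F] ↥L) (x : ↥K),
        ((φ.symm (π (ψ g)) x : ↥K) : Ω) = ((g ⟨(x : Ω), hKL x.2⟩ : ↥L) : Ω)

/-- The embedding problem `π : G ↠ Q` is solvable over `K/F` (w.r.t. `φ`). -/
def EPSolvable {F Ω : Type*} [Field F] [Field Ω] [Algebra F Ω]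
    {G Q : Type*} [Group G] [Group Q] (π : G →* Q)
    (K : IntermediateField F Ω) (φ : (↥K ≃ₐ[F] ↥K) ≃* Q) : Prop :=
  ∃ L, IsEPSolution π K φ L

/-- `ν(G ↠ Q, K/F)`: the number of solutions of the embedding problem `π : G ↠ Q`
over `K/F` (w.r.t. `φ`) inside a fixed extension `Ω` of `F`. -/
noncomputable def epCount {F Ω : Type*} [Field F] [Field Ω] [Algebra F Ω]
    {G Q : Type*} [Group G] [Group Q] (π : G →* Q)
    (K : IntermediateField F Ω) (φ : (↥K ≃ₐ[F] ↥K) ≃* Q) : ℕ :=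
  Nat.card {L : IntermediateField F Ω // IsEPSolution π K φ L}

/-- `ν(G, F)`: the number of intermediate fields of `Ω/F` that are finite Galois over `F`
with Galois group isomorphic to `G`. -/
noncomputable def galCount (F Ω : Type*) [Field F] [Field Ω] [Algebra F Ω]
    (G : Type*) [Group G] : ℕ :=
  Nat.card {L : IntermediateField F Ω //
    FiniteDimensional F ↥L ∧ IsGalois F ↥L ∧ Nonempty ((↥L ≃ₐ[F] ↥L) ≃* G)}

/-! Lift `σ` to `g ∈ E`. Then `g ^ pⁿ` lies in `N` and commutes with `g`, so it is a `σ`-fixed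
element of `A_i`. The `σ`-fixed elements of `𝔽_p[G_n]` are the multiples of the norm
`∑ σ^k = (σ - 1)^(pⁿ - 1)`; together with `𝔽_p[G_n] = 𝔽_p + (σ - 1)𝔽_p[G_n]` this shows that
`g ^ pⁿ = λ • (σ - 1)^(i - 1)` for some `λ ∈ 𝔽_p`. Every element of `E` is uniquely `z · g^j` with
`z ∈ A_i`, `0 ≤ j < pⁿ`, and in these coordinates the product is that of `A_i ⋊ G_n`, corrected
by `g ^ pⁿ` whenever the exponents overflow. For `λ = 0` this is the semidirect product; for
`λ ≠ 0` rescaling `A_i` by `λ` gives `A_i • G_n`; for `i = pⁿ` the correction is the norm of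
`-λ`, which disappears on replacing `g` by `(-λ) · g`. -/

theorem sub_one_pow_prime_pow_sub_one_eq_geom_sum {p : ℕ} [Fact p.Prime] {R : Type*} [CommRing R]
    [Algebra (ZMod p) R] (x : R) (n : ℕ) :
    (x - 1) ^ (p ^ n - 1) = ∑ k ∈ Finset.range (p ^ n), x ^ k := by
  suffices h : ((X : (ZMod p)[X]) - 1) ^ (p ^ n - 1) = ∑ k ∈ Finset.range (p ^ n), X ^ k by
    simpa using congrArg (aeval x) h
  refine mul_right_cancel₀ (X_sub_C_ne_zero (1 : ZMod p)) ?_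
  rw [C_1, geom_sum_mul, ← pow_succ,
    Nat.sub_add_cancel (Nat.one_le_pow _ _ (Fact.out : p.Prime).pos), sub_pow_char_pow, one_pow]

lemma sigGen_pow (p n k : ℕ) :
    sigGen p n ^ k = MonoidAlgebra.of _ _ (Multiplicative.ofAdd (k : ZMod (p ^ n))) := by
  rw [sigGen, ← map_pow, ← ofAdd_nsmul, nsmul_one]

lemma sum_range_sigGen_pow_eq_sum_of (p n : ℕ) [NeZero (p ^ n)] :
    ∑ k ∈ Finset.range (p ^ n), sigGen p n ^ k = ∑ γ, MonoidAlgebra.of _ _ γ :=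
  Finset.sum_nbij' (fun k => Multiplicative.ofAdd (k : ZMod (p ^ n)))
    (fun γ => (Multiplicative.toAdd γ).val) (by simp) (fun γ _ => by simpa using ZMod.val_lt _)
    (fun k hk => ZMod.val_cast_of_lt (Finset.mem_range.mp hk)) (fun γ _ => by simp)
    (fun k _ => sigGen_pow p n k)

lemma Representation.leftRegular_apply {k G : Type*} [CommSemiring k] [Group G] (g : G)
    (y : MonoidAlgebra k G) :
    Representation.leftRegular k G g y = MonoidAlgebra.of k G g * y := by
  induction y using MonoidAlgebra.induction_on with
  | of m => simp [MonoidAlgebra.single_mul_single]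
  | add x y hx hy => simp [hx, hy, mul_add]
  | smul r x hx => simp [hx]

lemma exists_eq_smul_of_sigGen_sub_one_mul_eq_zero {p n : ℕ} [Fact p.Prime] [NeZero (p ^ n)]
    {y : GrpAlg p n} (hy : (sigGen p n - 1) * y = 0) :
    ∃ a : ZMod p, y = a • (sigGen p n - 1) ^ (p ^ n - 1) := by
  set σ := Multiplicative.ofAdd (1 : ZMod (p ^ n))
  have hgen : ∀ γ, γ ∈ Subgroup.zpowers σ := fun γ => by
    simpa [σ, ← ofAdd_nsmul] using Subgroup.npow_mem_zpowers σ (Multiplicative.toAdd γ).val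
  have hconst := Representation.coeff_of_leftRegular_of_generator σ hgen y
    (by rwa [Representation.leftRegular_apply, ← sub_eq_zero, ← sub_one_mul])
  refine ⟨y.coeff σ, ?_⟩
  rw [sub_one_pow_prime_pow_sub_one_eq_geom_sum, sum_range_sigGen_pow_eq_sum_of]
  ext γ
  simp [hconst]

lemma exists_eq_algebraMap_add_sigGen_sub_one_mul {p n : ℕ} [NeZero (p ^ n)] (y : GrpAlg p n) :
    ∃ (a : ZMod p) (w : GrpAlg p n), y = algebraMap (ZMod p) _ a + (sigGen p n - 1) * w := by
  induction y using MonoidAlgebra.induction_on with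
  | of γ =>
    refine ⟨1, ∑ k ∈ Finset.range (Multiplicative.toAdd γ).val, sigGen p n ^ k, ?_⟩
    rw [mul_geom_sum, sigGen_pow, ZMod.natCast_zmod_val, ofAdd_toAdd, map_one, add_sub_cancel]
  | add x y hx hy =>
    obtain ⟨a, v, rfl⟩ := hx
    obtain ⟨b, w, rfl⟩ := hy
    exact ⟨a + b, v + w, by rw [map_add]; ring⟩
  | smul r x hx =>
    obtain ⟨a, v, rfl⟩ := hx
    refine ⟨r * a, r • v, ?_⟩
    rw [smul_add, mul_smul_comm, map_mul, ← smul_eq_mul, Algebra.smul_def]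

lemma sigA_sub_one_eq_mk (p n i : ℕ) :
    sigA p n i - 1 = Ideal.Quotient.mk (Ideal.span {(sigGen p n - 1) ^ i}) (sigGen p n - 1) := by
  rw [map_sub, map_one, sigA]

lemma exists_eq_smul_of_sigA_sub_one_mul_eq_zero {p n i : ℕ} [Fact p.Prime] [NeZero (p ^ n)]
    (hi1 : 1 ≤ i) (hi2 : i ≤ p ^ n) {x : Amod p n i} (hx : (sigA p n i - 1) * x = 0) :
    ∃ a : ZMod p, x = a • (sigA p n i - 1) ^ (i - 1) := by
  set t := sigGen p n - 1
  obtain ⟨y, rfl⟩ := Ideal.Quotient.mk_surjective x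
  rw [sigA_sub_one_eq_mk, ← map_mul, Ideal.Quotient.eq_zero_iff_mem,
    Ideal.mem_span_singleton'] at hx
  obtain ⟨z, hz⟩ := hx
  have hti : t ^ i = t * t ^ (i - 1) := by rw [← pow_succ', Nat.sub_add_cancel hi1]
  obtain ⟨a, ha⟩ := exists_eq_smul_of_sigGen_sub_one_mul_eq_zero (y := y - t ^ (i - 1) * z)
    (by linear_combination -hz + z * hti)
  obtain ⟨b, w, hw⟩ := exists_eq_algebraMap_add_sigGen_sub_one_mul (z + a • t ^ (p ^ n - i))
  have hy : y = b • t ^ (i - 1) + t ^ i * w := by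
    have htq : t ^ (p ^ n - 1) = t ^ (i - 1) * t ^ (p ^ n - i) := by
      rw [← pow_add]; congr 1; omega
    rw [Algebra.smul_def] at ha hw ⊢
    linear_combination ha + t ^ (i - 1) * hw + algebraMap (ZMod p) _ a * htq - w * hti
  refine ⟨b, ?_⟩
  rw [hy, map_add, map_mul, map_pow, ← sigA_sub_one_eq_mk, sigA_sub_one_pow_self, zero_mul,
    add_zero, Algebra.smul_def, map_mul, Ideal.Quotient.mk_algebraMap, map_pow,
    ← sigA_sub_one_eq_mk, ← Algebra.smul_def]

section Extension

variable {p n i : ℕ} {E : Type*} [Group E] {N : Subgroup E}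

variable [N.Normal] in
def IntertwinesConj (θ : (E ⧸ N) ≃* Multiplicative (ZMod (p ^ n)))
    (e : ↥N ≃* Multiplicative (Amod p n i)) : Prop :=
  ∀ (g : E) (x : ↥N), Multiplicative.toAdd (e (MulAut.conjNormal g x))
    = sigA p n i ^ (Multiplicative.toAdd (θ (QuotientGroup.mk g))).val * Multiplicative.toAdd (e x)

noncomputable def ofAmod (e : ↥N ≃* Multiplicative (Amod p n i)) (z : Amod p n i) : E :=
  e.symm (Multiplicative.ofAdd z)

variable (e : ↥N ≃* Multiplicative (Amod p n i))

lemma ofAmod_add (x y : Amod p n i) : ofAmod e (x + y) = ofAmod e x * ofAmod e y := by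
  simp [ofAmod]

lemma ofAmod_zero : ofAmod e 0 = 1 := by
  simp [ofAmod]

lemma ofAmod_injective : Function.Injective (ofAmod e) := fun x y h => by
  simpa [ofAmod] using h

lemma ofAmod_mem (z : Amod p n i) : ofAmod e z ∈ N :=
  SetLike.coe_mem _

lemma ofAmod_toAdd_apply (x : ↥N) : ofAmod e (Multiplicative.toAdd (e x)) = x := by
  simp [ofAmod]

variable [N.Normal]

lemma mk_ofAmod_mul (z : Amod p n i) (h : E) :
    (QuotientGroup.mk (ofAmod e z * h) : E ⧸ N) = QuotientGroup.mk h := by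
  rw [QuotientGroup.mk_mul, (QuotientGroup.eq_one_iff _).mpr (ofAmod_mem e z), one_mul]

variable {θ : (E ⧸ N) ≃* Multiplicative (ZMod (p ^ n))} {e}

lemma IntertwinesConj.mul_ofAmod (he : IntertwinesConj θ e) (h : E) (z : Amod p n i) :
    h * ofAmod e z
      = ofAmod e (sigA p n i ^ (Multiplicative.toAdd (θ (QuotientGroup.mk h))).val * z) * h := by
  have hconj := congrArg (fun w => (ofAmod e w : E)) (he h (e.symm (Multiplicative.ofAdd z)))
  simp only [ofAmod_toAdd_apply, MulAut.conjNormal_apply, MulEquiv.apply_symm_apply,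
    toAdd_ofAdd] at hconj
  rw [← hconj, inv_mul_cancel_right, ofAmod]

variable {g : E}

lemma apply_mk_pow (hg : θ (QuotientGroup.mk g) = Multiplicative.ofAdd 1) (k : ℕ) :
    θ (QuotientGroup.mk (g ^ k)) = Multiplicative.ofAdd (k : ZMod (p ^ n)) := by
  rw [QuotientGroup.mk_pow, map_pow, hg, ← ofAdd_nsmul, nsmul_one]

lemma IntertwinesConj.pow_mul_ofAmod (he : IntertwinesConj θ e)
    (hg : θ (QuotientGroup.mk g) = Multiplicative.ofAdd 1) (k : ℕ) (z : Amod p n i) :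
    g ^ k * ofAmod e z = ofAmod e (sigA p n i ^ k * z) * g ^ k := by
  rw [he.mul_ofAmod, apply_mk_pow hg, toAdd_ofAdd, ZMod.val_natCast,
    ← pow_eq_pow_mod _ (sigA_pow_order p n i)]

lemma IntertwinesConj.ofAmod_mul_pow_mul (he : IntertwinesConj θ e)
    (hg : θ (QuotientGroup.mk g) = Multiplicative.ofAdd 1) (a b : Amod p n i) (j k : ℕ) :
    ofAmod e a * g ^ j * (ofAmod e b * g ^ k)
      = ofAmod e (a + sigA p n i ^ j * b) * g ^ (j + k) := by
  rw [mul_assoc, ← mul_assoc (g ^ j), he.pow_mul_ofAmod hg, mul_assoc, ← pow_add, ← mul_assoc,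
    ← ofAmod_add]

lemma IntertwinesConj.ofAmod_mul_pow (he : IntertwinesConj θ e)
    (hg : θ (QuotientGroup.mk g) = Multiplicative.ofAdd 1) (a : Amod p n i) (k : ℕ) :
    (ofAmod e a * g) ^ k = ofAmod e ((∑ j ∈ Finset.range k, sigA p n i ^ j) * a) * g ^ k := by
  induction k with
  | zero => simp [ofAmod_zero]
  | succ k ih =>
    have hstep := he.ofAmod_mul_pow_mul hg ((∑ j ∈ Finset.range k, sigA p n i ^ j) * a) a k 1
    rw [pow_one] at hstep
    rw [pow_succ, ih, hstep, Finset.sum_range_succ, add_mul]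

lemma IntertwinesConj.exists_pow_eq_ofAmod (he : IntertwinesConj θ e)
    (hg : θ (QuotientGroup.mk g) = Multiplicative.ofAdd 1) :
    ∃ c, g ^ p ^ n = ofAmod e c ∧ (sigA p n i - 1) * c = 0 := by
  have hmem : g ^ p ^ n ∈ N := by
    rw [← QuotientGroup.eq_one_iff, ← map_eq_one_iff θ θ.injective, apply_mk_pow hg,
      ZMod.natCast_self, ofAdd_zero]
  have hc : g ^ p ^ n = ofAmod e _ := (ofAmod_toAdd_apply e ⟨_, hmem⟩).symm
  refine ⟨_, hc, ?_⟩
  have hcomm : g ^ 1 * g ^ p ^ n = g ^ p ^ n * g ^ 1 := by rw [← pow_add, ← pow_add, add_comm]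
  rw [hc, he.pow_mul_ofAmod hg] at hcomm
  linear_combination (ofAmod_injective e (mul_right_cancel hcomm))

lemma IntertwinesConj.exists_pow_eq_one (he : IntertwinesConj θ e)
    (hg : θ (QuotientGroup.mk g) = Multiplicative.ofAdd 1) {b : Amod p n i}
    (hgq : g ^ p ^ n = ofAmod e ((∑ k ∈ Finset.range (p ^ n), sigA p n i ^ k) * b)) :
    ∃ g' : E, θ (QuotientGroup.mk g') = Multiplicative.ofAdd 1 ∧ g' ^ p ^ n = 1 := by
  refine ⟨ofAmod e (-b) * g, by rw [mk_ofAmod_mul, hg], ?_⟩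
  rw [he.ofAmod_mul_pow hg, hgq, ← ofAmod_add, ← ofAmod_zero e]
  congr 1
  ring

lemma exists_eq_ofAmod_mul_pow [NeZero (p ^ n)]
    (hg : θ (QuotientGroup.mk g) = Multiplicative.ofAdd 1) (x : E) :
    ∃ (z : Amod p n i) (j : ZMod (p ^ n)), x = ofAmod e z * g ^ j.val := by
  set j := Multiplicative.toAdd (θ (QuotientGroup.mk x))
  have hmem : x * (g ^ j.val)⁻¹ ∈ N := by
    rw [← QuotientGroup.eq_one_iff, ← map_eq_one_iff θ θ.injective, QuotientGroup.mk_mul,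
      QuotientGroup.mk_inv, map_mul, map_inv, apply_mk_pow hg, ZMod.natCast_zmod_val, ofAdd_toAdd,
      mul_inv_cancel]
  exact ⟨_, j, by rw [ofAmod_toAdd_apply e ⟨_, hmem⟩, inv_mul_cancel_right]⟩

lemma eq_of_ofAmod_mul_pow_eq [NeZero (p ^ n)]
    (hg : θ (QuotientGroup.mk g) = Multiplicative.ofAdd 1) {z₁ z₂ : Amod p n i}
    {j₁ j₂ : ZMod (p ^ n)} (h : ofAmod e z₁ * g ^ j₁.val = ofAmod e z₂ * g ^ j₂.val) :
    z₁ = z₂ ∧ j₁ = j₂ := by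
  have hj : j₁ = j₂ := by
    have hθ := congrArg (fun x => θ (QuotientGroup.mk x)) h
    simp only [mk_ofAmod_mul, apply_mk_pow hg, ZMod.natCast_zmod_val] at hθ
    exact Multiplicative.ofAdd.injective hθ
  subst hj
  exact ⟨ofAmod_injective e (mul_right_cancel h), rfl⟩

lemma IntertwinesConj.nonempty_mulEquiv_aSemi [NeZero (p ^ n)] (he : IntertwinesConj θ e)
    (hg : θ (QuotientGroup.mk g) = Multiplicative.ofAdd 1) (hgq : g ^ p ^ n = 1) :
    Nonempty (E ≃* ASemi p n i) := by
  let Ψ : ASemi p n i →* E := MonoidHom.mk' (fun x => ofAmod e x.f * g ^ x.j.val) fun x y => by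
    rw [he.ofAmod_mul_pow_mul hg, ASemi.mul_def, ZMod.val_add, ← pow_eq_pow_mod _ hgq]
  refine ⟨(MulEquiv.ofBijective Ψ ⟨fun x y hxy => ?_, fun x => ?_⟩).symm⟩
  · obtain ⟨hf, hj⟩ := eq_of_ofAmod_mul_pow_eq hg hxy
    exact ASemi.ext hf hj
  · obtain ⟨z, j, rfl⟩ := exists_eq_ofAmod_mul_pow (e := e) hg x
    exact ⟨⟨z, j⟩, rfl⟩

lemma IntertwinesConj.nonempty_mulEquiv_aBull [Fact p.Prime] [NeZero (p ^ n)]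
    (he : IntertwinesConj θ e)
    (hg : θ (QuotientGroup.mk g) = Multiplicative.ofAdd 1) {a : ZMod p} (ha : a ≠ 0)
    (hgq : g ^ p ^ n = ofAmod e (a • (sigA p n i - 1) ^ (i - 1))) :
    Nonempty (E ≃* ABull p n i) := by
  let Ψ : ABull p n i →* E := MonoidHom.mk' (fun x => ofAmod e (a • x.f) * g ^ x.j.val)
    fun x y => by
      rw [he.ofAmod_mul_pow_mul hg, ABull.mul_def]
      dsimp only
      rcases lt_or_ge (x.j.val + y.j.val) (p ^ n) with hlt | hge
      · rw [if_pos hlt, ZMod.val_add_of_lt hlt, add_zero, smul_add, mul_smul_comm]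
      · rw [if_neg (not_lt.2 hge), ZMod.val_add_val_of_le hge, add_comm _ (p ^ n), pow_add, hgq,
          ← mul_assoc, ← ofAmod_add, smul_add, smul_add, mul_smul_comm]
  refine ⟨(MulEquiv.ofBijective Ψ ⟨fun x y hxy => ?_, fun x => ?_⟩).symm⟩
  · obtain ⟨hf, hj⟩ := eq_of_ofAmod_mul_pow_eq hg hxy
    exact ABull.ext (smul_right_injective _ ha hf) hj
  · obtain ⟨z, j, rfl⟩ := exists_eq_ofAmod_mul_pow (e := e) hg x
    exact ⟨⟨a⁻¹ • z, j⟩, by simp [Ψ, smul_smul, ha]⟩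

end Extension

theorem classification_of_cyclic_module_extensions_general
    (p n : ℕ) [Fact p.Prime]
    (E : Type*) [Group E]
    (N : Subgroup E) [hN : N.Normal]
    (θ : (E ⧸ N) ≃* Multiplicative (ZMod (p ^ n)))
    (i : ℕ) (hi1 : 1 ≤ i) (hi2 : i ≤ p ^ n)
    (e : ↥N ≃* Multiplicative (Amod p n i))
    (he : ∀ (g : E) (x : ↥N),
        Multiplicative.toAdd (e (MulAut.conjNormal g x))
          = sigA p n i ^ (Multiplicative.toAdd (θ (QuotientGroup.mk g))).val
              * Multiplicative.toAdd (e x)) :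
    (i = p ^ n → Nonempty (E ≃* ASemi p n i)) ∧
    (i < p ^ n → (Nonempty (E ≃* ASemi p n i) ∨ Nonempty (E ≃* ABull p n i))) := by
  have : NeZero (p ^ n) := ⟨pow_ne_zero n (Fact.out : p.Prime).ne_zero⟩
  have he : IntertwinesConj θ e := he
  obtain ⟨g, hg⟩ := (θ.surjective.comp QuotientGroup.mk_surjective) (Multiplicative.ofAdd 1)
  obtain ⟨c, hgc, hc⟩ := he.exists_pow_eq_ofAmod hg
  obtain ⟨a, rfl⟩ := exists_eq_smul_of_sigA_sub_one_mul_eq_zero hi1 hi2 hc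
  refine ⟨fun hiq => ?_, fun _ => ?_⟩
  · subst hiq
    rw [sub_one_pow_prime_pow_sub_one_eq_geom_sum, ← mul_smul_one] at hgc
    obtain ⟨g', hg', hg'q⟩ := he.exists_pow_eq_one hg hgc
    exact he.nonempty_mulEquiv_aSemi hg' hg'q
  · by_cases ha : a = 0
    · exact .inl (he.nonempty_mulEquiv_aSemi hg (by rw [hgc, ha, zero_smul, ofAmod_zero]))
    · exact .inr (he.nonempty_mulEquiv_aBull hg ha hgc)

/-- (Prop. 3.4, Waterhouse) **Classification of extensions of `ℤ/pⁿℤ` by a cyclic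
`𝔽_p[ℤ/pⁿℤ]`-module.**  Let `E` be a finite group with a normal subgroup `N` that is an
elementary abelian `p`-group, such that `E/N` is cyclic of order `pⁿ` (via a fixed
isomorphism `θ : E/N ≅ G_n`), and such that the conjugation action of `E/N` on `N` makes
`N` isomorphic to `A_i` as an `𝔽_p[G_n]`-module (witnessed by `e`, which intertwines
conjugation by `g` with multiplication by `σ^j` where `θ(gN) = σ^j`).  If `i = pⁿ`, then
`E ≅ A_{pⁿ} ⋊ G_n`; if `1 ≤ i < pⁿ`, then `E ≅ A_i ⋊ G_n` or `E ≅ A_i • G_n`. -/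
theorem classification_of_cyclic_module_extensions
    (p n : ℕ) [Fact p.Prime] (hodd : Odd p) (hn : 1 ≤ n)
    (E : Type*) [Group E] [Finite E]
    (N : Subgroup E) [hN : N.Normal]
    (helem : ∀ x ∈ N, x ^ p = 1)
    (θ : (E ⧸ N) ≃* Multiplicative (ZMod (p ^ n)))
    (i : ℕ) (hi1 : 1 ≤ i) (hi2 : i ≤ p ^ n)
    (e : ↥N ≃* Multiplicative (Amod p n i))
    (he : ∀ (g : E) (x : ↥N),
        Multiplicative.toAdd (e (MulAut.conjNormal g x))
          = sigA p n i ^ (Multiplicative.toAdd (θ (QuotientGroup.mk g))).val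
              * Multiplicative.toAdd (e x)) :
    (i = p ^ n → Nonempty (E ≃* ASemi p n i)) ∧
    (i < p ^ n → (Nonempty (E ≃* ASemi p n i) ∨ Nonempty (E ≃* ABull p n i))) :=
  classification_of_cyclic_module_extensions_general p n E N (hN := hN) θ i hi1 hi2 e he
end

section
/- Let p be an odd prime and n ≥ 1. (i) If p^{n−1}+2 ≤ i ≤ pⁿ and N is a normal subgroup of A_i ⋊ G_n such that N is an elementary abelian p-group and (A_i ⋊ G_n)/N is cyclic of order pⁿ, then N = A_i × {1}. (ii) If p^{n−1}+1 ≤ i < pⁿ and N is a normal subgroup of A_i • G_n such that N is an elementary abelian p-group and (A_i • G_n)/N is cyclic of order pⁿ, then N = A_i × {1}. Consequently, a Galois extension L/F with group A_i ⋊ G_n (resp. A_i • G_n) in these ranges has a unique intermediate ℤ/pⁿℤ-extension K/F such that L/K is elementary p-abelian. -/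
open Polynomial

/-!
Since `G/N` is cyclic, `N` contains every commutator, in particular `(σ - 1, 0)`. An element
`x = (f, σ^j)` of `N` has order `p`, so `j = c·p^{n-1}` with `0 ≤ c < p`; it suffices to show
`c = 0`, since then `N ≤ A_i × {1}` and the two have the same index. Nonvanishing in `A_i` is
detected by the ring map `A_i → 𝔽_p[X]/(X^i)`, `σ ↦ 1 + X`, under which
`σ^{c p^{n-1}} ↦ (1 + X^{p^{n-1}})^c`.

If `i ≥ p^{n-1} + 2`, then `x` commutes with `(σ - 1, 0)`, i.e. `(σ^j - 1)(σ - 1) = 0`, but the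
image of the left side has coefficient `c` at `X^{p^{n-1}+1}`. If `i = p^{n-1} + 1` (only for
`A_i • G_n`), then `w = σ^j - 1` satisfies `w² = 0`, so
`∑_{m<p} σ^{mj} = p + p(p-1)/2·w = 0` as `p` is odd; since the `p` products making up `x^p`
wrap around exactly `c` times, `x^p = 1` then says `c·(σ - 1)^{i-1} = 0`, which is false.
-/

section GroupTheory

variable {G : Type*} [Group G]

theorem Subgroup.mem_of_mul_eq_mul_mul_of_isCyclic (N : Subgroup G) [N.Normal]
    (hN : IsCyclic (G ⧸ N)) {g h z : G} (hz : g * h = z * (h * g)) : z ∈ N := by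
  let := hN.commGroup
  rw [← QuotientGroup.eq_one_iff]
  have hgh := congrArg (fun x : G => (x : G ⧸ N)) hz
  simp only [QuotientGroup.mk_mul] at hgh
  rw [mul_comm (g : G ⧸ N)] at hgh
  exact mul_eq_right.mp hgh.symm

theorem MonoidHom.eq_ker_of_le_ker {H : Type*} [Group H] [Finite H] {f : G →* H}
    (hf : Function.Surjective f) {N : Subgroup G} (hN : N ≤ f.ker)
    (hcard : Nat.card (G ⧸ N) = Nat.card H) : N = f.ker := by
  have hidx : N.index = f.ker.index := by
    rw [Subgroup.index_ker, f.range_eq_top.mpr hf, Subgroup.card_top, ← hcard]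
    rfl
  have h := Subgroup.relIndex_mul_index hN
  rw [← hidx] at h
  have hne : N.index ≠ 0 := by
    rw [Subgroup.index, hcard]
    exact Nat.card_pos.ne'
  exact le_antisymm hN (Subgroup.relIndex_eq_one.mp ((Nat.mul_eq_right hne).mp h))

end GroupTheory

theorem ZMod.exists_val_eq_mul_pow_pred {p n : ℕ} [NeZero (p ^ n)] (hn : 1 ≤ n)
    {j : ZMod (p ^ n)} (hpj : p • j = 0) (hj : j ≠ 0) :
    ∃ c : ℕ, (c : ZMod p) ≠ 0 ∧ j.val = c * p ^ (n - 1) := by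
  have hpn : p ^ n = p * p ^ (n - 1) := by rw [← pow_succ']; congr 1; omega
  have hp : 0 < p := Nat.pos_of_ne_zero fun h => NeZero.ne (p ^ n) (by rw [h, zero_pow (by omega)])
  have hdvd : p ^ (n - 1) ∣ j.val := by
    have h : p ^ n ∣ p * j.val := by
      rw [← ZMod.natCast_eq_zero_iff, Nat.cast_mul, ZMod.natCast_val, ZMod.cast_id',
        id, ← nsmul_eq_mul, hpj]
    exact Nat.dvd_of_mul_dvd_mul_left hp ((dvd_of_eq hpn.symm).trans h)
  obtain ⟨c, hc⟩ := hdvd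
  refine ⟨c, ?_, by rw [hc, mul_comm]⟩
  rw [Ne, ZMod.natCast_eq_zero_iff]
  rintro ⟨d, rfl⟩
  have hlt := ZMod.val_lt j
  rw [hc, hpn] at hlt
  rcases d with _ | d
  · exact hj ((ZMod.val_eq_zero j).mp (by rw [hc]; ring))
  · nlinarith [pow_pos hp (n - 1)]

theorem sum_range_one_add_pow_eq_zero {R : Type*} [CommRing R] {p : ℕ} (hp : Odd p)
    (hpR : (p : R) = 0) {w : R} (hw : w ^ 2 = 0) : ∑ m ∈ Finset.range p, (1 + w) ^ m = 0 := by
  have hpow (m : ℕ) : (1 + w) ^ m = 1 + m * w := by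
    induction m with
    | zero => simp
    | succ m ih => rw [pow_succ, ih]; push_cast; linear_combination (m : R) * hw
  obtain ⟨k, rfl⟩ := hp
  have hsum : ∑ m ∈ Finset.range (2 * k + 1), m = (2 * k + 1) * k := by
    have := Finset.sum_range_id_mul_two (2 * k + 1)
    rw [Nat.add_sub_cancel] at this
    nlinarith
  rw [Finset.sum_congr rfl fun m _ => hpow m, Finset.sum_add_distrib, ← Finset.sum_mul,
    ← Nat.cast_sum, hsum, Finset.sum_const, Finset.card_range, nsmul_one, Nat.cast_mul, hpR]
  ring

theorem Polynomial.one_add_X_pow_mul_pow_char_pow {p : ℕ} [Fact p.Prime] (c k : ℕ) :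
    (1 + X : (ZMod p)[X]) ^ (c * p ^ k) = expand (ZMod p) (p ^ k) ((1 + X) ^ c) := by
  rw [mul_comm, pow_mul, add_pow_char_pow, one_pow, map_pow, map_add, map_one, expand_X]

abbrev TruncPoly (p i : ℕ) : Type := (ZMod p)[X] ⧸ Ideal.span {(X : (ZMod p)[X]) ^ i}

namespace TruncPoly

variable {p i : ℕ}

noncomputable abbrev mk (p i : ℕ) : (ZMod p)[X] →+* TruncPoly p i := Ideal.Quotient.mk _

theorem mk_eq_zero_iff {f : (ZMod p)[X]} : mk p i f = 0 ↔ ∀ d < i, f.coeff d = 0 := by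
  rw [Ideal.Quotient.eq_zero_iff_mem, Ideal.mem_span_singleton, X_pow_dvd_iff]

theorem mk_X_pow_eq_zero {m : ℕ} (h : i ≤ m) : mk p i (X ^ m) = 0 :=
  mk_eq_zero_iff.mpr fun d hd => by rw [coeff_X_pow, if_neg (by omega)]

theorem natCast_self_eq_zero : (p : TruncPoly p i) = 0 := by
  rw [← map_natCast (mk p i), ← map_natCast C, ZMod.natCast_self, map_zero, map_zero]

theorem mk_one_add_X_pow_eq_one [Fact p.Prime] {n : ℕ} (hi : i ≤ p ^ n) :
    mk p i (1 + X) ^ p ^ n = 1 := by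
  rw [← map_pow, add_pow_char_pow, one_pow, map_add, mk_X_pow_eq_zero hi, map_one, add_zero]

noncomputable def cyclicChar [Fact p.Prime] (n : ℕ) [NeZero (p ^ n)] (hi : i ≤ p ^ n) :
    Multiplicative (ZMod (p ^ n)) →* TruncPoly p i where
  toFun g := mk p i (1 + X) ^ g.toAdd.val
  map_one' := by simp
  map_mul' a b := by
    rw [toAdd_mul, ZMod.val_add, ← pow_add]
    exact (pow_eq_pow_mod _ (mk_one_add_X_pow_eq_one hi)).symm

end TruncPoly

namespace Amod

open TruncPoly

variable {p n i : ℕ} [Fact p.Prime] [NeZero (p ^ n)]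

theorem lift_cyclicChar_sigGen (hi : i ≤ p ^ n) :
    MonoidAlgebra.lift (ZMod p) _ _ (cyclicChar n hi) (sigGen p n) = mk p i (1 + X) := by
  rw [sigGen, MonoidAlgebra.lift_of]
  change mk p i (1 + X) ^ (1 : ZMod (p ^ n)).val = _
  rw [ZMod.val_one_eq_one_mod, ← pow_eq_pow_mod 1 (mk_one_add_X_pow_eq_one hi), pow_one]

noncomputable def toTruncPoly (hi : i ≤ p ^ n) : Amod p n i →+* TruncPoly p i :=
  Ideal.Quotient.lift _ (MonoidAlgebra.lift (ZMod p) _ _ (cyclicChar n hi)).toRingHom <| by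
    intro a ha
    obtain ⟨b, rfl⟩ := Ideal.mem_span_singleton'.mp ha
    change MonoidAlgebra.lift _ _ _ _ (b * (sigGen p n - 1) ^ i) = 0
    rw [map_mul, map_pow, map_sub, map_one, lift_cyclicChar_sigGen, ← map_one (mk p i),
      ← map_sub, add_sub_cancel_left, ← map_pow, mk_X_pow_eq_zero le_rfl, mul_zero]

theorem toTruncPoly_sigA (hi : i ≤ p ^ n) : toTruncPoly hi (sigA p n i) = mk p i (1 + X) :=
  lift_cyclicChar_sigGen hi

theorem toTruncPoly_sigA_sub_one (hi : i ≤ p ^ n) :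
    toTruncPoly hi (sigA p n i - 1) = mk p i X := by
  rw [map_sub, toTruncPoly_sigA, map_one, ← map_one (mk p i), ← map_sub, add_sub_cancel_left]

theorem sigA_pow_mul_sub_one_mul_ne_zero (hi : i ≤ p ^ n) {c k : ℕ} (hc : (c : ZMod p) ≠ 0)
    (hk : p ^ k + 1 < i) : (sigA p n i ^ (c * p ^ k) - 1) * (sigA p n i - 1) ≠ 0 := by
  intro h
  have hq : p ^ k ≠ 0 := pow_ne_zero k (Fact.out : p.Prime).ne_zero
  replace h := congrArg (toTruncPoly hi) h
  rw [map_mul, map_sub, map_pow, toTruncPoly_sigA, toTruncPoly_sigA_sub_one, map_one, map_zero,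
    ← map_pow, ← map_one (mk p i), ← map_sub, ← map_mul, mk_eq_zero_iff] at h
  replace h := h (p ^ k + 1) hk
  rw [coeff_mul_X, coeff_sub, one_add_X_pow_mul_pow_char_pow, coeff_expand (Nat.pos_of_ne_zero hq),
    if_pos dvd_rfl, Nat.div_self (Nat.pos_of_ne_zero hq), coeff_one_add_X_pow,
    Nat.choose_one_right, coeff_one, if_neg hq, sub_zero] at h
  exact hc h

theorem toTruncPoly_nsmul_sigA_sub_one_pow_ne_zero (hi : i ≤ p ^ n) {c k : ℕ}
    (hc : (c : ZMod p) ≠ 0) (hk : k < i) : toTruncPoly hi (c • (sigA p n i - 1) ^ k) ≠ 0 := by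
  rw [map_nsmul, map_pow, toTruncPoly_sigA_sub_one, ← map_pow, ← map_nsmul, Ne, mk_eq_zero_iff]
  intro h
  replace h := h k hk
  rw [coeff_smul, coeff_X_pow_self, nsmul_eq_mul, mul_one] at h
  exact hc h

theorem toTruncPoly_sum_sigA_pow_eq_zero (hp : Odd p) (hi : i ≤ p ^ n) {k : ℕ}
    (hik : i ≤ 2 * p ^ k) (c : ℕ) :
    toTruncPoly hi (∑ m ∈ Finset.range p, sigA p n i ^ (m * (c * p ^ k))) = 0 := by
  obtain ⟨g, hg⟩ : (X : (ZMod p)[X]) ^ p ^ k ∣ (1 + X ^ p ^ k) ^ c - 1 := by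
    have h := sub_dvd_pow_sub_pow (1 + X ^ p ^ k : (ZMod p)[X]) 1 c
    rwa [one_pow, add_sub_cancel_left] at h
  have hsq : (mk p i (1 + X) ^ (c * p ^ k) - 1) ^ 2 = 0 := by
    rw [← map_pow, one_add_X_pow_mul_pow_char_pow, map_pow, map_add, map_one, expand_X,
      ← map_one (mk p i), ← map_sub, hg, ← map_pow, mul_pow, ← pow_mul, map_mul,
      mk_X_pow_eq_zero (by omega), zero_mul]
  rw [map_sum]
  convert sum_range_one_add_pow_eq_zero hp natCast_self_eq_zero hsq using 2 with m
  rw [map_pow, toTruncPoly_sigA, add_sub_cancel, ← pow_mul, mul_comm]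

theorem eq_zero_of_sigA_pow_val_sub_one_mul_eq_zero (hn : 1 ≤ n) (hi : p ^ (n - 1) + 1 < i)
    (hi' : i ≤ p ^ n) {j : ZMod (p ^ n)} (hpj : p • j = 0)
    (h : (sigA p n i ^ j.val - 1) * (sigA p n i - 1) = 0) : j = 0 := by
  by_contra hj
  obtain ⟨c, hc, hval⟩ := ZMod.exists_val_eq_mul_pow_pred hn hpj hj
  rw [hval] at h
  exact sigA_pow_mul_sub_one_mul_ne_zero hi' hc hi h

end Amod

namespace ASemi

variable {p n i : ℕ}

theorem j_pow [NeZero (p ^ n)] (x : ASemi p n i) (k : ℕ) : (x ^ k).j = k • x.j :=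
  (congrArg Multiplicative.toAdd (map_pow (piSemi p n i) x k)).trans (toAdd_pow _ _)

theorem sigA_sub_one_mem [NeZero (p ^ n)] (hP : 1 < p ^ n) (N : Subgroup (ASemi p n i)) [N.Normal]
    (hN : IsCyclic (ASemi p n i ⧸ N)) : (⟨sigA p n i - 1, 0⟩ : ASemi p n i) ∈ N := by
  have : Fact (1 < p ^ n) := ⟨hP⟩
  refine N.mem_of_mul_eq_mul_mul_of_isCyclic hN (g := ⟨0, 1⟩) (h := ⟨1, 0⟩) ?_
  ext <;> simp [mul_def, ZMod.val_one]

theorem sigA_pow_val_sub_one_mul_eq_zero {x : ASemi p n i}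
    (h : x * ⟨sigA p n i - 1, 0⟩ = ⟨sigA p n i - 1, 0⟩ * x) :
    (sigA p n i ^ x.j.val - 1) * (sigA p n i - 1) = 0 := by
  have hf := congrArg ASemi.f h
  simp only [mul_def, ZMod.val_zero, pow_zero, one_mul] at hf
  linear_combination hf

theorem le_ker [Fact p.Prime] [NeZero (p ^ n)] (hn : 1 ≤ n) (hi : p ^ (n - 1) + 2 ≤ i)
    (hi' : i ≤ p ^ n) (N : Subgroup (ASemi p n i)) [N.Normal] (hexp : ∀ x ∈ N, x ^ p = 1)
    (hcomm : ∀ x y : N, x * y = y * x) (hcyc : IsCyclic (ASemi p n i ⧸ N)) :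
    N ≤ (piSemi p n i).ker := by
  intro x hx
  have ht := sigA_sub_one_mem (by omega) N hcyc
  have hpj : p • x.j = 0 := by rw [← j_pow, hexp x hx]; rfl
  have hxt := congrArg Subtype.val (hcomm ⟨x, hx⟩ ⟨_, ht⟩)
  exact ofAdd_eq_one.mpr (Amod.eq_zero_of_sigA_pow_val_sub_one_mul_eq_zero hn (by omega) hi'
    hpj (sigA_pow_val_sub_one_mul_eq_zero hxt))

end ASemi

namespace ABull

variable {p n i : ℕ}

theorem j_pow [NeZero (p ^ n)] (x : ABull p n i) (k : ℕ) : (x ^ k).j = k • x.j :=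
  (congrArg Multiplicative.toAdd (map_pow (piBull p n i) x k)).trans (toAdd_pow _ _)

theorem f_pow [NeZero (p ^ n)] (x : ABull p n i) (k : ℕ) :
    (x ^ k).f = (∑ m ∈ Finset.range k, sigA p n i ^ (m * x.j.val)) * x.f
      + (k * x.j.val / p ^ n) • (sigA p n i - 1) ^ (i - 1) := by
  induction k with
  | zero => simp [one_def]
  | succ k ih =>
    have hv := ZMod.val_lt x.j
    have hval : (k • x.j).val = k * x.j.val % p ^ n := by
      rw [nsmul_eq_mul, ZMod.val_mul, ZMod.val_natCast, Nat.mod_mul_mod]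
    have hcarry : (k + 1) * x.j.val / p ^ n
        = k * x.j.val / p ^ n + if p ^ n ≤ k * x.j.val % p ^ n + x.j.val then 1 else 0 := by
      rw [add_mul, one_mul, Nat.add_div (NeZero.pos _), Nat.div_eq_of_lt hv,
        Nat.mod_eq_of_lt hv, add_zero]
    rw [pow_succ, mul_def, ih, j_pow, hval, ← pow_eq_pow_mod _ (sigA_pow_order p n i), hcarry,
      Finset.sum_range_succ]
    dsimp only
    split_ifs <;> first | omega | (simp only [nsmul_eq_mul]; push_cast; ring)

theorem sigA_sub_one_mem [NeZero (p ^ n)] (hP : 1 < p ^ n) (N : Subgroup (ABull p n i)) [N.Normal]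
    (hN : IsCyclic (ABull p n i ⧸ N)) : (⟨sigA p n i - 1, 0⟩ : ABull p n i) ∈ N := by
  have : Fact (1 < p ^ n) := ⟨hP⟩
  refine N.mem_of_mul_eq_mul_mul_of_isCyclic hN (g := ⟨0, 1⟩) (h := ⟨1, 0⟩) ?_
  ext <;> simp [mul_def, ZMod.val_one, hP]

theorem sigA_pow_val_sub_one_mul_eq_zero [NeZero (p ^ n)] {x : ABull p n i}
    (h : x * ⟨sigA p n i - 1, 0⟩ = ⟨sigA p n i - 1, 0⟩ * x) :
    (sigA p n i ^ x.j.val - 1) * (sigA p n i - 1) = 0 := by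
  have hf := congrArg ABull.f h
  simp only [mul_def, ZMod.val_zero, pow_zero, one_mul, add_zero, zero_add, ZMod.val_lt,
    if_true] at hf
  linear_combination hf

theorem j_eq_zero_of_pow_eq_one [Fact p.Prime] [NeZero (p ^ n)] (hp : Odd p) (hn : 1 ≤ n)
    (hi : i = p ^ (n - 1) + 1) {x : ABull p n i} (hx : x ^ p = 1) : x.j = 0 := by
  by_contra hj
  have hpj : p • x.j = 0 := by rw [← j_pow, hx]; rfl
  obtain ⟨c, hc, hval⟩ := ZMod.exists_val_eq_mul_pow_pred hn hpj hj
  have hpn : p ^ n = p * p ^ (n - 1) := by rw [← pow_succ']; congr 1; omega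
  have hq : 0 < p ^ (n - 1) := pow_pos (Fact.out : p.Prime).pos _
  have hi' : i ≤ p ^ n := by nlinarith [(Fact.out : p.Prime).two_le]
  have hcarry : p * (c * p ^ (n - 1)) / p ^ n = c := by
    rw [hpn, mul_left_comm, Nat.mul_div_cancel _ (by rw [← hpn]; exact NeZero.pos _)]
  have hf := congrArg (fun y : ABull p n i => Amod.toTruncPoly hi' y.f) hx
  simp only [f_pow, hval, hcarry, map_add, map_mul, one_def, map_zero,
    Amod.toTruncPoly_sum_sigA_pow_eq_zero hp hi' (k := n - 1) (by omega) c, zero_mul,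
    zero_add] at hf
  exact Amod.toTruncPoly_nsmul_sigA_sub_one_pow_ne_zero hi' hc (by omega : i - 1 < i) hf

theorem le_ker [Fact p.Prime] [NeZero (p ^ n)] (hp : Odd p) (hn : 1 ≤ n)
    (hi : p ^ (n - 1) + 1 ≤ i) (hi' : i < p ^ n) (N : Subgroup (ABull p n i)) [N.Normal]
    (hexp : ∀ x ∈ N, x ^ p = 1) (hcomm : ∀ x y : N, x * y = y * x)
    (hcyc : IsCyclic (ABull p n i ⧸ N)) :
    N ≤ (piBull p n i).ker := by
  intro x hx
  refine ofAdd_eq_one.mpr ?_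
  rcases hi.eq_or_lt with hi | hi
  · exact j_eq_zero_of_pow_eq_one hp hn hi.symm (hexp x hx)
  have ht := sigA_sub_one_mem (by omega) N hcyc
  have hpj : p • x.j = 0 := by rw [← j_pow, hexp x hx]; rfl
  have hxt := congrArg Subtype.val (hcomm ⟨x, hx⟩ ⟨_, ht⟩)
  exact Amod.eq_zero_of_sigA_pow_val_sub_one_mul_eq_zero hn hi hi'.le hpj
    (sigA_pow_val_sub_one_mul_eq_zero hxt)

end ABull

/-- (Lem. 5.5) Let `p` be an odd prime and `n ≥ 1`.
(i) If `p^{n−1}+2 ≤ i ≤ pⁿ` and `N` is a normal subgroup of `A_i ⋊ G_n` that is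
elementary abelian with `(A_i ⋊ G_n)/N` cyclic of order `pⁿ`, then `N = A_i × {1}`,
i.e. `N` is the kernel of the natural projection.
(ii) If `p^{n−1}+1 ≤ i < pⁿ` and `N` is a normal subgroup of `A_i • G_n` that is
elementary abelian with `(A_i • G_n)/N` cyclic of order `pⁿ`, then `N = A_i × {1}`.
(Consequently a Galois extension with one of these groups has a unique intermediate
`ℤ/pⁿℤ`-extension with elementary `p`-abelian complement.) -/
theorem unique_elementary_abelian_normal_subgroup
    (p n : ℕ) [Fact p.Prime] (hodd : Odd p) (hn : 1 ≤ n) :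
    (∀ i : ℕ, p ^ (n - 1) + 2 ≤ i → i ≤ p ^ n →
      ∀ (N : Subgroup (ASemi p n i)) [N.Normal],
        (∀ x ∈ N, x ^ p = 1) → (∀ x y : ↥N, x * y = y * x) →
        IsCyclic (ASemi p n i ⧸ N) → Nat.card (ASemi p n i ⧸ N) = p ^ n →
        N = (piSemi p n i).ker) ∧
    (∀ i : ℕ, p ^ (n - 1) + 1 ≤ i → i < p ^ n →
      ∀ (N : Subgroup (ABull p n i)) [N.Normal],
        (∀ x ∈ N, x ^ p = 1) → (∀ x y : ↥N, x * y = y * x) →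
        IsCyclic (ABull p n i ⧸ N) → Nat.card (ABull p n i ⧸ N) = p ^ n →
        N = (piBull p n i).ker) := by
  have hcard : Nat.card (Multiplicative (ZMod (p ^ n))) = p ^ n := by
    rw [Nat.card_congr Multiplicative.toAdd, Nat.card_zmod]
  refine ⟨fun i hi hi' N _ hexp hcomm hcyc hN => ?_, fun i hi hi' N _ hexp hcomm hcyc hN => ?_⟩
  · exact (piSemi p n i).eq_ker_of_le_ker (fun g => ⟨⟨0, g.toAdd⟩, rfl⟩)
      (ASemi.le_ker hn hi hi' N hexp hcomm hcyc) (hN.trans hcard.symm)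
  · exact (piBull p n i).eq_ker_of_le_ker (fun g => ⟨⟨0, g.toAdd⟩, rfl⟩)
      (ABull.le_ker hodd hn hi hi' N hexp hcomm hcyc) (hN.trans hcard.symm)
end

section
/- Let p be an odd prime and n ≥ 3. The group A_2 • G_{n−2} (where G_{n−2} = ℤ/p^{n−2}ℤ) is a nonabelian group of order pⁿ in which the element (0, σ) has order p^{n−1}; in particular A_2 • G_{n−2} contains an element of order p^{n−1}. -/
open Polynomial

/-! For `m ≥ 1`, `σ ↦ 1 + ε` identifies `A_2 = 𝔽_p[G_m]/⟨(σ−1)²⟩` with the dual numbers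
`𝔽_p[ε]`, so `|A_2| = p²` and `σ ≠ 1` in `A_2`. The latter makes `(0, σ)(1, 1) = (σ, σ)`
differ from `(1, 1)(0, σ) = (1, σ)`. Powers of `g = (0, σ)` involve no carry up to
`g^{pᵐ-1} = (0, σ^{pᵐ-1})`; the next step carries, giving `g^{pᵐ} = (σ − 1, 1)`, a nonzero
element of the elementary abelian `p`-group `A_2`, so `g` has order `p^{m+1}`. -/

section DualNumber

open DualNumber TrivSqZeroExt

variable (p : ℕ) {m : ℕ}

lemma GrpAlg.algHom_ext [NeZero (p ^ m)] {B : Type*} [Semiring B] [Algebra (ZMod p) B]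
    ⦃φ ψ : GrpAlg p m →ₐ[ZMod p] B⦄ (h : φ (sigGen p m) = ψ (sigGen p m)) : φ = ψ := by
  refine MonoidAlgebra.algHom_ext (fun g => ?_) (Subsingleton.elim _ _)
  have hg : MonoidAlgebra.single g 1 = sigGen p m ^ g.toAdd.val := by
    rw [sigGen, ← map_pow, ← ofAdd_nsmul, nsmul_one, ZMod.natCast_zmod_val, ofAdd_toAdd]
    rfl
  rw [hg, map_pow, map_pow, h]

lemma Amod.algHom_ext [NeZero (p ^ m)] {ℓ : ℕ} {B : Type*} [Semiring B] [Algebra (ZMod p) B]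
    ⦃φ ψ : Amod p m ℓ →ₐ[ZMod p] B⦄ (h : φ (sigA p m ℓ) = ψ (sigA p m ℓ)) : φ = ψ :=
  Ideal.Quotient.algHom_ext _ (GrpAlg.algHom_ext p h)

noncomputable def dualNumberChar (hm : m ≠ 0) :
    Multiplicative (ZMod (p ^ m)) →* (ZMod p)[ε] where
  toFun j := 1 + inr (ZMod.castHom (dvd_pow_self p hm) (ZMod p) j.toAdd)
  map_one' := by simp
  map_mul' x y := by
    simp only [toAdd_mul, map_add, inr_add, add_mul, mul_add, inr_mul_inr, mul_one,
      one_mul]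
    abel

noncomputable def amodTwoToDualNumber (hm : m ≠ 0) : Amod p m 2 →ₐ[ZMod p] (ZMod p)[ε] :=
  Ideal.Quotient.liftₐ _ (MonoidAlgebra.lift _ _ _ (dualNumberChar p hm)) fun a ha => by
    obtain ⟨c, rfl⟩ := Ideal.mem_span_singleton'.mp ha
    rw [map_mul, map_pow, map_sub, map_one, sigGen, MonoidAlgebra.lift_of]
    simp [dualNumberChar, sq]

lemma amodTwoToDualNumber_sigA (hm : m ≠ 0) :
    amodTwoToDualNumber p hm (sigA p m 2) = 1 + ε := by
  change MonoidAlgebra.lift _ _ _ (dualNumberChar p hm) (MonoidAlgebra.of _ _ _) = _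
  rw [MonoidAlgebra.lift_of]
  change (1 : (ZMod p)[ε]) + inr (ZMod.castHom _ (ZMod p) 1) = 1 + ε
  rw [map_one]
  rfl

variable (m) in
noncomputable def dualNumberToAmodTwo : (ZMod p)[ε] →ₐ[ZMod p] Amod p m 2 :=
  DualNumber.lift ⟨(Algebra.ofId _ _, sigA p m 2 - 1),
    by rw [← sq, sigA_sub_one_pow_self], fun _ => Commute.all _ _⟩

variable (m) in
lemma dualNumberToAmodTwo_eps : dualNumberToAmodTwo p m ε = sigA p m 2 - 1 :=
  DualNumber.lift_apply_eps _

noncomputable def amodTwoEquivDualNumber [NeZero (p ^ m)] (hm : m ≠ 0) :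
    Amod p m 2 ≃ₐ[ZMod p] (ZMod p)[ε] :=
  AlgEquiv.ofAlgHom (amodTwoToDualNumber p hm) (dualNumberToAmodTwo p m)
    (DualNumber.algHom_ext (by
      rw [AlgHom.comp_apply, dualNumberToAmodTwo_eps, map_sub, map_one,
        amodTwoToDualNumber_sigA, add_sub_cancel_left, AlgHom.id_apply]))
    (Amod.algHom_ext p (by
      rw [AlgHom.comp_apply, amodTwoToDualNumber_sigA, map_add, map_one,
        dualNumberToAmodTwo_eps, add_sub_cancel, AlgHom.id_apply]))

lemma card_amod_two [NeZero (p ^ m)] (hm : m ≠ 0) : Nat.card (Amod p m 2) = p ^ 2 := by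
  rw [Nat.card_congr (amodTwoEquivDualNumber p hm).toEquiv]
  exact (Nat.card_prod _ _).trans (by rw [Nat.card_zmod, sq])

lemma sigA_two_ne_one [Fact (1 < p)] (hm : m ≠ 0) : sigA p m 2 ≠ 1 := by
  intro h
  have := congrArg (fun x => snd (amodTwoToDualNumber p hm x)) h
  simp [amodTwoToDualNumber_sigA] at this

end DualNumber

namespace ABull

variable {p n ℓ : ℕ}

lemma mk_mul_mk_of_val_add_lt {f₁ f₂ : Amod p n ℓ} {j₁ j₂ : ZMod (p ^ n)}
    (h : j₁.val + j₂.val < p ^ n) :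
    (⟨f₁, j₁⟩ : ABull p n ℓ) * ⟨f₂, j₂⟩ = ⟨f₁ + sigA p n ℓ ^ j₁.val * f₂, j₁ + j₂⟩ := by
  rw [mul_def, if_pos h, add_zero]

theorem card_eq : Nat.card (ABull p n ℓ) = Nat.card (Amod p n ℓ) * p ^ n := by
  rw [← Nat.card_zmod (p ^ n), ← Nat.card_prod]
  exact Nat.card_congr ⟨fun a => (a.f, a.j), fun x => ⟨x.1, x.2⟩, fun _ => rfl, fun _ => rfl⟩

lemma mk_zero_one_mul_mk_one_zero_ne (h1 : 1 < p ^ n) (hσ : sigA p n ℓ ≠ 1) :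
    (⟨0, 1⟩ : ABull p n ℓ) * ⟨1, 0⟩ ≠ ⟨1, 0⟩ * ⟨0, 1⟩ := by
  have hval : (1 : ZMod (p ^ n)).val = 1 := ZMod.val_one'' (by omega)
  rw [mk_mul_mk_of_val_add_lt (by simpa [hval] using h1),
    mk_mul_mk_of_val_add_lt (by simpa [hval] using h1), hval]
  intro h
  apply hσ
  simpa using congrArg f h

variable [NeZero (p ^ n)]

lemma mk_zero_pow (f : Amod p n ℓ) (k : ℕ) : (⟨f, 0⟩ : ABull p n ℓ) ^ k = ⟨k • f, 0⟩ := by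
  induction k with
  | zero => rw [pow_zero, zero_smul, one_def]
  | succ k ih =>
    rw [pow_succ, ih, mk_mul_mk_of_val_add_lt (by simpa using NeZero.pos (p ^ n)),
      ZMod.val_zero, pow_zero, one_mul, succ_nsmul, add_zero]

lemma mk_zero_one_pow_of_lt {k : ℕ} (hk : k < p ^ n) :
    (⟨0, 1⟩ : ABull p n ℓ) ^ k = ⟨0, k⟩ := by
  induction k with
  | zero => rw [pow_zero, Nat.cast_zero, one_def]
  | succ k ih =>
    have hval : (k : ZMod (p ^ n)).val + (1 : ZMod (p ^ n)).val < p ^ n := by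
      rw [ZMod.val_natCast_of_lt (by omega), ZMod.val_one'' (by omega)]
      exact hk
    rw [pow_succ, ih (by omega), mk_mul_mk_of_val_add_lt hval, mul_zero, add_zero,
      Nat.cast_succ]

lemma mk_zero_one_pow_self (h1 : 1 < p ^ n) :
    (⟨0, 1⟩ : ABull p n ℓ) ^ p ^ n = ⟨(sigA p n ℓ - 1) ^ (ℓ - 1), 0⟩ := by
  have hsplit : (⟨0, 1⟩ : ABull p n ℓ) ^ p ^ n = ⟨0, 1⟩ ^ (p ^ n - 1) * ⟨0, 1⟩ := by
    rw [← pow_succ, Nat.sub_add_cancel h1.le]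
  have hval : ((p ^ n - 1 : ℕ) : ZMod (p ^ n)).val + (1 : ZMod (p ^ n)).val = p ^ n := by
    rw [ZMod.val_natCast_of_lt (by omega), ZMod.val_one'' (by omega)]
    omega
  have hj : ((p ^ n - 1 : ℕ) : ZMod (p ^ n)) + 1 = 0 := by
    rw [← Nat.cast_add_one, Nat.sub_add_cancel h1.le, ZMod.natCast_self]
  rw [hsplit, mk_zero_one_pow_of_lt (by omega), mul_def, hval, if_neg (lt_irrefl _), hj,
    mul_zero, zero_add, zero_add]

theorem orderOf_mk_zero_one [Fact p.Prime] (h1 : 1 < p ^ n)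
    (hε : (sigA p n ℓ - 1) ^ (ℓ - 1) ≠ 0) :
    orderOf (⟨0, 1⟩ : ABull p n ℓ) = p ^ (n + 1) := by
  apply orderOf_eq_prime_pow
  · rw [mk_zero_one_pow_self h1]
    exact fun h => hε (congrArg f h)
  · rw [pow_succ, pow_mul, mk_zero_one_pow_self h1, mk_zero_pow,
      ← Nat.cast_smul_eq_nsmul (ZMod p), ZMod.natCast_self, zero_smul, one_def]

end ABull

theorem bull_A2_is_modular_group_general
    (p n : ℕ) [Fact p.Prime] (hn : 3 ≤ n) :
    (∃ a b : ABull p (n - 2) 2, a * b ≠ b * a) ∧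
    Nat.card (ABull p (n - 2) 2) = p ^ n ∧
    orderOf (⟨0, 1⟩ : ABull p (n - 2) 2) = p ^ (n - 1) := by
  have hm : n - 2 ≠ 0 := by omega
  have h1 : 1 < p ^ (n - 2) := Nat.one_lt_pow hm (Fact.out : p.Prime).one_lt
  have hs : (sigA p (n - 2) 2 - 1) ^ (2 - 1) ≠ 0 := by
    rw [pow_one, sub_ne_zero]
    exact sigA_two_ne_one p hm
  refine ⟨⟨_, _, ABull.mk_zero_one_mul_mk_one_zero_ne h1 (sigA_two_ne_one p hm)⟩, ?_, ?_⟩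
  · rw [ABull.card_eq, card_amod_two p hm, ← pow_add]
    congr 1
    omega
  · rw [ABull.orderOf_mk_zero_one h1 hs]
    congr 1
    omega

/-- (Ex. 3.6) Let `p` be an odd prime and `n ≥ 3`.  The group `A_2 • G_{n−2}` is a
nonabelian group of order `pⁿ` in which the element `(0, σ)` has order `p^{n−1}`; in
particular it contains an element of order `p^{n−1}` (so `A_2 • G_{n−2} ≅ M_{pⁿ}`). -/
theorem bull_A2_is_modular_group
    (p n : ℕ) [Fact p.Prime] (hodd : Odd p) (hn : 3 ≤ n) :
    (∃ a b : ABull p (n - 2) 2, a * b ≠ b * a) ∧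
    Nat.card (ABull p (n - 2) 2) = p ^ n ∧
    orderOf (⟨0, 1⟩ : ABull p (n - 2) 2) = p ^ (n - 1) :=
  bull_A2_is_modular_group_general p n hn
end
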